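/- arXiv:2004.14301 — 10 statements merged into one kernel-verified Lean document; each statement's English description precedes it below -/
import Mathlib

section
/- Let V be a real vector space and X ⊆ V a subset of cardinality strictly less than the continuum, and let V₀ be a 2-dimensional linear subspace of V. Then there exists a linear projection P : V → V with range V₀ such that the restriction of P to X is injective and both P restricted to X and its inverse preserve betweenness. -/
/-!
The kernel of the projection is a complement `K` of `V₀` meeting every plane
`span {x - a, a - b}` with `a, b, x ∈ X` only in `0`; then the projection is injective on each
affine plane through three points of `X`, which transports betweenness in both directions.
Such a `K` is a maximal element, by Zorn's lemma, among the subspaces disjoint from `V₀` and from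
all these planes. To enlarge `K` by some `x₀ ∉ K ⊔ V₀`, add `x₀ + t b₁ + ⋯ + tⁿ bₙ` for a basis
`b` of `V₀`: for a fixed plane `W`, the space `K ⊔ W` cannot contain the `(n + 1)`-dimensional
span of `x₀` and `V₀`, so only the finitely many roots of a nonzero polynomial in `t` are bad,
and fewer than continuum planes cannot exclude every real `t`.
-/

open Module Submodule Cardinal

section
variable {𝕜 V : Type*} [Field 𝕜] [AddCommGroup V] [Module 𝕜 V]

namespace Submodule

theorem disjoint_sup_span_singleton {K W : Submodule 𝕜 V} {u : V} (hKW : Disjoint K W)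
    (hu : u ∉ K ⊔ W) : Disjoint (K ⊔ span 𝕜 {u}) W := by
  rw [disjoint_def]
  rintro _ hw hwW
  obtain ⟨k, hk, _, hr, rfl⟩ := mem_sup.1 hw
  obtain ⟨r, rfl⟩ := mem_span_singleton.1 hr
  rcases eq_or_ne r 0 with rfl | hr0
  · rw [zero_smul, add_zero] at hwW ⊢
    exact disjoint_def.1 hKW k hk hwW
  · refine absurd ?_ hu
    have hu_eq : u = r⁻¹ • ((k + r • u) - k) := by
      rw [add_sub_cancel_left, smul_smul, inv_mul_cancel₀ hr0, one_smul]
    rw [hu_eq]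
    exact smul_mem _ _ (sub_mem (mem_sup_right hwW) (mem_sup_left hk))

theorem finrank_le_of_le_sup_of_disjoint {K A W : Submodule 𝕜 V} [FiniteDimensional 𝕜 W]
    (hA : A ≤ K ⊔ W) (hKA : Disjoint K A) : finrank 𝕜 A ≤ finrank 𝕜 W := by
  set f := K.mkQ ∘ₗ A.subtype
  have hf : Function.Injective f := by
    rw [← LinearMap.ker_eq_bot, LinearMap.ker_comp, ker_mkQ, ← disjoint_iff_comap_eq_bot]
    exact hKA.symm
  have hrange : LinearMap.range f ≤ W.map K.mkQ := by
    rintro _ ⟨a, rfl⟩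
    obtain ⟨k, hk, w, hw, hkw⟩ := mem_sup.1 (hA a.2)
    refine ⟨w, hw, ?_⟩
    simp [f, ← hkw, (Quotient.mk_eq_zero K).2 hk]
  calc finrank 𝕜 A = finrank 𝕜 (LinearMap.range f) := (LinearMap.finrank_range_of_inj hf).symm
    _ ≤ finrank 𝕜 (W.map K.mkQ) := finrank_mono hrange
    _ ≤ finrank 𝕜 W := finrank_map_le _ _

end Submodule

theorem finrank_span_pair_le (u v : V) : finrank 𝕜 (span 𝕜 {u, v}) ≤ 2 := by
  classical
  have := finrank_span_finset_le_card (R := 𝕜) ({u, v} : Finset V)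
  rw [Finset.coe_insert, Finset.coe_singleton] at this
  exact this.trans Finset.card_le_two

def momentCurve {m : ℕ} (c : Fin m → V) (t : 𝕜) : V := ∑ j : Fin m, t ^ (j : ℕ) • c j

open Polynomial in
theorem finite_setOf_momentCurve_mem {m : ℕ} {c : Fin m → V} {S : Submodule 𝕜 V}
    (hc : ∃ j, c j ∉ S) : {t : 𝕜 | momentCurve c t ∈ S}.Finite := by
  classical
  obtain ⟨j, hj⟩ := hc
  obtain ⟨φ, hφj, hSφ⟩ := exists_le_ker_of_notMem hj
  set p : 𝕜[X] := ofFn m (fun i => φ (c i))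
  have hp : p ≠ 0 := by
    refine (map_ne_zero_iff _ (injective_ofFn m)).2 fun h => hφj ?_
    exact congrFun h j
  refine (finite_setOfPred_isRoot hp).subset fun t ht => ?_
  have : φ (momentCurve c t) = 0 := hSφ ht
  simpa [p, IsRoot, ofFn_eq_sum_monomial, eval_finsetSum, momentCurve, mul_comm] using this

theorem finite_setOf_momentCurve_mem_sup {m : ℕ} {c : Fin m → V} (hc : LinearIndependent 𝕜 c)
    {K W : Submodule 𝕜 V} [FiniteDimensional 𝕜 W] (hKc : Disjoint K (span 𝕜 (Set.range c)))
    (hW : finrank 𝕜 W < m) : {t : 𝕜 | momentCurve c t ∈ K ⊔ W}.Finite := by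
  refine finite_setOf_momentCurve_mem (by_contra fun h => hW.not_ge ?_)
  push Not at h
  have hle : span 𝕜 (Set.range c) ≤ K ⊔ W := span_le.2 (Set.range_subset_iff.2 h)
  simpa [finrank_span_eq_card hc] using finrank_le_of_le_sup_of_disjoint hle hKc

end

theorem exists_forall_notMem_of_mk_lt_continuum {ι : Type*} (hι : #ι < 𝔠) (B : ι → Set ℝ)
    (hB : ∀ i, (B i).Countable) : ∃ t : ℝ, ∀ i, t ∉ B i := by
  have hcard : #(⋃ i, B i) < 𝔠 := by
    rw [← lift_lt_continuum.{0, _}]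
    calc lift #(⋃ i, B i) ≤ lift #ι * ⨆ i, lift #(B i) := mk_iUnion_le_lift B
      _ ≤ lift #ι * ℵ₀ := by
          gcongr
          exact ciSup_le' fun i => by simpa using (hB i).le_aleph0
      _ < 𝔠 := mul_lt_of_lt aleph0_le_continuum (lift_lt_continuum.2 hι) aleph0_lt_continuum
  by_contra! h
  have : (⋃ i, B i) = Set.univ := Set.eq_univ_of_forall fun t => Set.mem_iUnion.2 (h t)
  rw [this, mk_univ, mk_real] at hcard
  exact hcard.false

theorem mem_segment_iff_map_mem_segment {𝕜 E F : Type*} [Field 𝕜] [LinearOrder 𝕜]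
    [IsStrictOrderedRing 𝕜] [AddCommGroup E] [Module 𝕜 E] [AddCommGroup F] [Module 𝕜 F]
    (P : E →ₗ[𝕜] F) {a b x : E} (h : Disjoint (LinearMap.ker P) (span 𝕜 {x - a, a - b})) :
    x ∈ segment 𝕜 a b ↔ P x ∈ segment 𝕜 (P a) (P b) := by
  rw [← P.coe_toAffineMap, ← image_segment]
  refine ⟨Set.mem_image_of_mem _, ?_⟩
  rintro ⟨y, ⟨u, v, hu, hv, huv, rfl⟩, hPy⟩
  obtain rfl : u = 1 - v := eq_sub_of_add_eq huv
  have hdiff : x - ((1 - v) • a + v • b) = (x - a) + v • (a - b) := by module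
  have hker : x - ((1 - v) • a + v • b) ∈ LinearMap.ker P := by
    rw [LinearMap.mem_ker, map_sub, ← P.coe_toAffineMap, hPy, sub_self]
  have hspan : x - ((1 - v) • a + v • b) ∈ span 𝕜 {x - a, a - b} := by
    rw [hdiff]
    exact add_mem (subset_span (by simp)) (smul_mem _ _ (subset_span (by simp)))
  rw [sub_eq_zero.1 (disjoint_def.1 h _ hker hspan)]
  exact ⟨1 - v, v, hu, hv, huv, rfl⟩

section
variable {V : Type*} [AddCommGroup V] [Module ℝ V]

theorem exists_sub_mem_forall_disjoint_sup_span_singleton (V₀ : Submodule ℝ V)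
    [FiniteDimensional ℝ V₀] {𝒲 : Set (Submodule ℝ V)} (h𝒲 : #𝒲 < 𝔠)
    (hfin : ∀ W ∈ 𝒲, FiniteDimensional ℝ W ∧ finrank ℝ W ≤ finrank ℝ V₀)
    {K : Submodule ℝ V} (hKV₀ : Disjoint K V₀) (hK : ∀ W ∈ 𝒲, Disjoint K W)
    {x₀ : V} (hx₀ : x₀ ∉ K ⊔ V₀) :
    ∃ u, x₀ - u ∈ V₀ ∧ Disjoint (K ⊔ span ℝ {u}) V₀ ∧ ∀ W ∈ 𝒲, Disjoint (K ⊔ span ℝ {u}) W := by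
  set b : Fin (finrank ℝ V₀) → V := fun i => finBasis ℝ V₀ i
  have hb_span : span ℝ (Set.range b) = V₀ := by
    rw [show b = V₀.subtype ∘ finBasis ℝ V₀ from rfl, Set.range_comp, span_image,
      (finBasis ℝ V₀).span_eq, map_subtype_top]
  set c : Fin (finrank ℝ V₀ + 1) → V := Fin.cons x₀ b
  have hc : LinearIndependent ℝ c := by
    refine linearIndependent_finCons.2 ⟨?_, ?_⟩
    · exact (finBasis ℝ V₀).linearIndependent.map' V₀.subtype (ker_subtype V₀)
    · rw [hb_span]
      exact fun h => hx₀ (mem_sup_right h)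
  have hKc : Disjoint K (span ℝ (Set.range c)) := by
    rw [Fin.range_cons, span_insert, hb_span, sup_comm]
    exact (disjoint_sup_span_singleton hKV₀.symm (by rwa [sup_comm])).symm
  obtain ⟨t, ht⟩ := exists_forall_notMem_of_mk_lt_continuum h𝒲
    (fun W => {t : ℝ | momentCurve c t ∈ K ⊔ (W : Submodule ℝ V)}) fun ⟨W, hW⟩ =>
      haveI := (hfin W hW).1
      (finite_setOf_momentCurve_mem_sup hc hKc (Nat.lt_succ_of_le (hfin W hW).2)).countable
  have hu : x₀ - momentCurve c t ∈ V₀ := by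
    have : x₀ - momentCurve c t = -∑ i : Fin (finrank ℝ V₀), t ^ ((i : ℕ) + 1) • b i := by
      simp [momentCurve, c, Fin.sum_univ_succ, pow_succ]
    rw [this]
    exact neg_mem (sum_mem fun i _ => smul_mem _ _ (finBasis ℝ V₀ i).2)
  refine ⟨momentCurve c t, hu, disjoint_sup_span_singleton hKV₀ fun h => hx₀ ?_,
    fun W hW => disjoint_sup_span_singleton (hK W hW) (ht ⟨W, hW⟩)⟩
  rw [← sub_add_cancel x₀ (momentCurve c t)]
  exact add_mem (mem_sup_right hu) h

theorem exists_isCompl_forall_disjoint (V₀ : Submodule ℝ V) [FiniteDimensional ℝ V₀]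
    {𝒲 : Set (Submodule ℝ V)} (h𝒲 : #𝒲 < 𝔠)
    (hfin : ∀ W ∈ 𝒲, FiniteDimensional ℝ W ∧ finrank ℝ W ≤ finrank ℝ V₀) :
    ∃ K, IsCompl V₀ K ∧ ∀ W ∈ 𝒲, Disjoint K W := by
  set S := {K : Submodule ℝ V | Disjoint K V₀ ∧ ∀ W ∈ 𝒲, Disjoint K W}
  obtain ⟨K, hK⟩ : ∃ K, Maximal (· ∈ S) K := by
    refine zorn_le₀ S fun c hcS hc => ⟨sSup c, ⟨?_, fun W hW => ?_⟩, fun _ => le_sSup⟩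
    · exact hc.directedOn.disjoint_sSup_left.2 fun K hK => (hcS hK).1
    · exact hc.directedOn.disjoint_sSup_left.2 fun K hK => (hcS hK).2 W hW
  refine ⟨K, ⟨hK.1.1.symm, codisjoint_iff.2 (eq_top_iff.2 fun x₀ _ => by_contra fun hx₀ => ?_)⟩,
    hK.1.2⟩
  obtain ⟨u, hu, hKu⟩ := exists_sub_mem_forall_disjoint_sup_span_singleton V₀ h𝒲 hfin
    hK.1.1 hK.1.2 (sup_comm K V₀ ▸ hx₀)
  have huK : u ∈ K := hK.2 hKu le_sup_left (mem_sup_right (mem_span_singleton_self u))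
  rw [← sub_add_cancel x₀ u] at hx₀
  exact hx₀ (add_mem (mem_sup_left hu) (mem_sup_right huK))

end

/-- A subset of cardinality < continuum of a real vector space can be
projected onto a 2-dimensional subspace by a linear projection that is injective on
the set and preserves betweenness in both directions. -/
theorem stmt_0 (V : Type*) [AddCommGroup V] [Module ℝ V]
    (X : Set V) (hX : Cardinal.mk X < Cardinal.continuum)
    (V₀ : Submodule ℝ V) (hV₀ : Module.finrank ℝ V₀ = 2) :
    ∃ P : V →ₗ[ℝ] V, (P ∘ₗ P = P) ∧ LinearMap.range P = V₀ ∧ Set.InjOn P X ∧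
      (∀ a b x : V, a ∈ X → b ∈ X → x ∈ X →
        (x ∈ segment ℝ a b ↔ P x ∈ segment ℝ (P a) (P b))) := by
  have : FiniteDimensional ℝ V₀ := .of_finrank_pos (by omega)
  set plane : X × X × X → Submodule ℝ V :=
    fun p => span ℝ {(p.2.2 : V) - p.1, (p.1 : V) - p.2.1}
  have hplanes : #(Set.range plane) < 𝔠 := by
    refine mk_range_le.trans_lt ?_
    simpa [mk_prod] using
      mul_lt_of_lt aleph0_le_continuum hX (mul_lt_of_lt aleph0_le_continuum hX hX)
  obtain ⟨K, hV₀K, hK⟩ := exists_isCompl_forall_disjoint V₀ hplanes <| by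
    rintro _ ⟨p, rfl⟩
    exact ⟨FiniteDimensional.span_of_finite ℝ (Set.toFinite _), hV₀ ▸ finrank_span_pair_le _ _⟩
  set P := V₀.projection K hV₀K
  have hbetween : ∀ a ∈ X, ∀ b ∈ X, ∀ x ∈ X,
      (x ∈ segment ℝ a b ↔ P x ∈ segment ℝ (P a) (P b)) :=
    fun a ha b hb x hx => mem_segment_iff_map_mem_segment P <| by
      rw [ker_projection]
      exact hK _ ⟨(⟨a, ha⟩, ⟨b, hb⟩, ⟨x, hx⟩), rfl⟩
  refine ⟨P, isIdempotentElem_projection hV₀K, range_projection hV₀K, fun x hx y hy hxy => ?_,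
    fun a b x ha hb hx => hbetween a ha b hb x hx⟩
  simpa using (hbetween y hy y hy x hx).2 (by rw [hxy, segment_same]; rfl)
end

section
/- There exists a subset S of ℝ² such that for every line L ⊆ ℝ², the intersection S ∩ L contains exactly two points. -/
open Cardinal

def lineThrough (p v : ℝ × ℝ) : Set (ℝ × ℝ) := {x | ∃ t : ℝ, x = p + t • v}

namespace TwoPt
abbrev Pt := ℝ × ℝ

lemma mem_self (p v : Pt) : p ∈ lineThrough p v := ⟨0, by simp⟩

lemma line_shift {p v q : Pt} (hq : q ∈ lineThrough p v) :
    lineThrough q v = lineThrough p v := by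
  obtain ⟨s, rfl⟩ := hq
  ext x
  constructor
  · rintro ⟨t, rfl⟩; exact ⟨s + t, by rw [add_smul]; abel⟩
  · rintro ⟨t, rfl⟩; exact ⟨t - s, by rw [sub_smul]; abel⟩

lemma line_smul {p v : Pt} {c : ℝ} (hc : c ≠ 0) :
    lineThrough p (c • v) = lineThrough p v := by
  ext x
  constructor
  · rintro ⟨t, rfl⟩; exact ⟨t * c, by rw [mul_smul]⟩
  · rintro ⟨t, rfl⟩; exact ⟨t / c, by rw [smul_smul, div_mul_cancel₀ _ hc]⟩

/-- the unique line through two distinct points -/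
lemma line_unique {a b p v : Pt} (hab : a ≠ b)
    (ha : a ∈ lineThrough p v) (hb : b ∈ lineThrough p v) :
    lineThrough p v = lineThrough a (b - a) := by
  obtain ⟨s, hs⟩ := ha
  obtain ⟨t, ht⟩ := hb
  have hts : t - s ≠ 0 := by
    intro h
    apply hab
    rw [hs, ht, sub_eq_zero.mp h]
  have hba : b - a = (t - s) • v := by rw [hs, ht, sub_smul]; abel
  rw [hba, line_smul hts, line_shift ⟨s, hs⟩]


/-- three points on a common line -/
def Coll (x y z : Pt) : Prop :=
  ∃ p v, v ≠ (0 : Pt) ∧ x ∈ lineThrough p v ∧ y ∈ lineThrough p v ∧ z ∈ lineThrough p v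

/-- no three distinct points of S are collinear -/
def Good (S : Set Pt) : Prop :=
  ∀ x ∈ S, ∀ y ∈ S, ∀ z ∈ S, x ≠ y → x ≠ z → y ≠ z → ¬ Coll x y z

lemma mk_line {p v : Pt} (hv : v ≠ 0) : #(lineThrough p v) = Cardinal.continuum := by
  have : Function.Bijective (fun t : ℝ => (⟨p + t • v, ⟨t, rfl⟩⟩ : lineThrough p v)) := by
    constructor
    · intro s t h
      have h2 : p + s • v = p + t • v := congrArg Subtype.val h
      have h3 : s • v = t • v := by
        have := add_left_cancel h2
        exact this
      by_contra hst
      have h4 : (s - t) • v = 0 := by rw [sub_smul, h3, sub_self]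
      rcases smul_eq_zero.mp h4 with h | h
      · exact hst (sub_eq_zero.mp h)
      · exact hv h
    · rintro ⟨x, t, rfl⟩; exact ⟨t, rfl⟩
  rw [← Cardinal.mk_real]
  exact (Cardinal.mk_congr (Equiv.ofBijective _ this)).symm

lemma mk_Pt : #Pt = Cardinal.continuum := by
  simp [Cardinal.mk_real, Cardinal.mul_eq_self aleph0_le_continuum]


lemma Coll.rot {x y z : Pt} (h : Coll x y z) : Coll y z x := by
  obtain ⟨p, v, hv, h1, h2, h3⟩ := h; exact ⟨p, v, hv, h2, h3, h1⟩

lemma Coll.swap23 {x y z : Pt} (h : Coll x y z) : Coll x z y := by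
  obtain ⟨p, v, hv, h1, h2, h3⟩ := h; exact ⟨p, v, hv, h1, h3, h2⟩

lemma coll_mem_line {a b z : Pt} (hab : a ≠ b) (h : Coll a b z) :
    z ∈ lineThrough a (b - a) := by
  obtain ⟨p, v, hv, h1, h2, h3⟩ := h
  rw [← line_unique hab h1 h2]; exact h3

lemma mem_line_pair (a b : Pt) : a ∈ lineThrough a (b - a) ∧ b ∈ lineThrough a (b - a) :=
  ⟨mem_self _ _, ⟨1, by simp⟩⟩

/-- Key extension step: a set of size < continuum with no 3 collinear points and at most one
point on the line `L` can be extended by a new point of `L`. -/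
lemma exists_ext {P : Set Pt} {p v : Pt} (hv : v ≠ 0)
    (hcard : #P < Cardinal.continuum) (hgood : Good P)
    (hsub : (P ∩ lineThrough p v).Subsingleton) :
    ∃ x ∈ lineThrough p v, x ∉ P ∧ Good (insert x P) := by
  classical
  set L := lineThrough p v with hL
  set B : Set Pt := ⋃ q : P × P, (lineThrough q.1.1 (q.2.1 - q.1.1) ∩ L) with hB
  -- each piece is subsingleton
  have hpiece : ∀ q : P × P, (lineThrough q.1.1 (q.2.1 - q.1.1) ∩ L).Subsingleton := by
    rintro ⟨⟨a, ha⟩, ⟨b, hb⟩⟩ x ⟨hx1, hx2⟩ y ⟨hy1, hy2⟩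
    by_contra hxy
    by_cases hab : a = b
    · subst hab
      obtain ⟨t, ht⟩ := hx1
      obtain ⟨s, hs⟩ := hy1
      exact hxy (by simp_all)
    · have e1 : lineThrough a (b - a) = lineThrough x (y - x) := line_unique hxy hx1 hy1
      have e2 : L = lineThrough x (y - x) := line_unique hxy hx2 hy2
      have haL : a ∈ L := by rw [e2, ← e1]; exact (mem_line_pair a b).1
      have hbL : b ∈ L := by rw [e2, ← e1]; exact (mem_line_pair a b).2
      exact hab (hsub ⟨ha, haL⟩ ⟨hb, hbL⟩)
  have hBcard : #B < Cardinal.continuum := by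
    refine lt_of_le_of_lt (Cardinal.mk_iUnion_le _) ?_
    have h1 : #(P × P) < Cardinal.continuum := by
      simp only [Cardinal.mk_prod, Cardinal.lift_id]
      exact Cardinal.mul_lt_of_lt Cardinal.aleph0_le_continuum hcard hcard
    have h2 : ⨆ q : P × P, #(lineThrough q.1.1 (q.2.1 - q.1.1) ∩ L : Set Pt) ≤ 1 :=
      ciSup_le' fun q => Cardinal.mk_le_one_iff_set_subsingleton.mpr (hpiece q)
    calc #(P × P) * ⨆ q : P × P, #(lineThrough q.1.1 (q.2.1 - q.1.1) ∩ L : Set Pt)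
        ≤ #(P × P) * 1 := mul_le_mul_right h2 _
      _ = #(P × P) := mul_one _
      _ < Cardinal.continuum := h1
  have hB'card : #(B ∪ P : Set Pt) < Cardinal.continuum := by
    refine lt_of_le_of_lt (Cardinal.mk_union_le _ _) ?_
    exact Cardinal.add_lt_of_lt Cardinal.aleph0_le_continuum hBcard hcard
  -- pick a point of L outside B ∪ P
  have hex : ∃ x ∈ L, x ∉ B ∪ P := by
    by_contra hcon
    push_neg at hcon
    have : L ⊆ B ∪ P := hcon
    have := Cardinal.mk_le_mk_of_subset this
    rw [mk_line hv] at this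
    exact absurd (lt_of_le_of_lt this hB'card) (lt_irrefl _)
  obtain ⟨x, hxL, hxBP⟩ := hex
  have hxB : x ∉ B := fun h => hxBP (Or.inl h)
  have hxP : x ∉ P := fun h => hxBP (Or.inr h)
  refine ⟨x, hxL, hxP, ?_⟩
  -- main: no collinearity a b x with a b ∈ P distinct
  have main : ∀ a ∈ P, ∀ b ∈ P, a ≠ b → ¬ Coll a b x := by
    intro a ha b hb hab hcoll
    have hx : x ∈ lineThrough a (b - a) := coll_mem_line hab hcoll
    exact hxB (Set.mem_iUnion.mpr ⟨(⟨a, ha⟩, ⟨b, hb⟩), hx, hxL⟩)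
  intro u hu w hw z hz huw huz hwz hcoll
  rcases hu with rfl | hu
  · rcases hw with rfl | hw
    · exact huw rfl
    rcases hz with rfl | hz
    · exact huz rfl
    exact main w hw z hz hwz hcoll.rot
  · rcases hw with rfl | hw
    · rcases hz with rfl | hz
      · exact hwz rfl
      exact main u hu z hz huz hcoll.swap23
    · rcases hz with rfl | hz
      · exact main u hu w hw huw hcoll
      · exact hgood u hu w hw z hz huw huz hwz hcoll

/-- Specification for the set `N` added at the stage of line `L`. -/
def Spec (P : Set Pt) (L : Set Pt) (N : Set Pt) : Prop :=
  N ⊆ L ∧ N.Finite ∧ Good (P ∪ N) ∧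
    ∃ a b : Pt, a ≠ b ∧ a ∈ (P ∪ N) ∩ L ∧ b ∈ (P ∪ N) ∩ L

lemma exists_spec {P : Set Pt} {p v : Pt} (hv : v ≠ 0)
    (hcard : #P < Cardinal.continuum) (hgood : Good P) :
    ∃ N, Spec P (lineThrough p v) N := by
  classical
  set L := lineThrough p v with hL
  by_cases h2 : ∃ a ∈ P ∩ L, ∃ b ∈ P ∩ L, a ≠ b
  · obtain ⟨a, ha, b, hb, hab⟩ := h2
    exact ⟨∅, by simp, Set.finite_empty, by simpa using hgood,
      a, b, hab, by simpa using ha, by simpa using hb⟩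
  · push_neg at h2
    have hsub : (P ∩ L).Subsingleton := fun a ha b hb => h2 a ha b hb
    obtain ⟨x, hxL, hxP, hgood1⟩ := exists_ext hv hcard hgood hsub
    have hcard1 : #(insert x P : Set Pt) < Cardinal.continuum := by
      refine lt_of_le_of_lt (Cardinal.mk_insert_le) ?_
      exact Cardinal.add_lt_of_lt Cardinal.aleph0_le_continuum hcard
        (lt_of_lt_of_le Cardinal.one_lt_aleph0 Cardinal.aleph0_le_continuum)
    by_cases h1 : ∃ a, a ∈ P ∩ L
    · obtain ⟨a, haP, haL⟩ := h1
      refine ⟨{x}, by simpa using hxL, Set.finite_singleton x, ?_, a, x, ?_, ?_, ?_⟩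
      · rwa [Set.union_singleton]
      · rintro rfl; exact hxP haP
      · exact ⟨Or.inl haP, haL⟩
      · exact ⟨Or.inr rfl, hxL⟩
    · push_neg at h1
      have hPL : P ∩ L = ∅ := Set.eq_empty_iff_forall_notMem.mpr h1
      have hsub1 : ((insert x P : Set Pt) ∩ L).Subsingleton := by
        intro a ha b hb
        have hxa : a = x := by
          rcases ha.1 with rfl | haP
          · rfl
          · exact absurd (hPL ▸ (⟨haP, ha.2⟩ : a ∈ P ∩ L)) (Set.notMem_empty a)
        have hxb : b = x := by
          rcases hb.1 with rfl | hbP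
          · rfl
          · exact absurd (hPL ▸ (⟨hbP, hb.2⟩ : b ∈ P ∩ L)) (Set.notMem_empty b)
        rw [hxa, hxb]
      obtain ⟨y, hyL, hyP1, hgood2⟩ := exists_ext hv hcard1 hgood1 hsub1
      have hxy : x ≠ y := fun h => hyP1 (h ▸ Set.mem_insert x P)
      have hset : P ∪ {x, y} = insert y (insert x P) := by
        ext z; simp [or_comm, or_assoc, or_left_comm]
      refine ⟨{x, y}, ?_, (Set.finite_singleton y).insert x, ?_, x, y, hxy, ?_, ?_⟩
      · intro z hz; rcases hz with rfl | rfl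
        · exact hxL
        · exact hyL
      · rwa [hset]
      · exact ⟨Or.inr (Or.inl rfl), hxL⟩
      · exact ⟨Or.inr (Or.inr rfl), hyL⟩

/-- The type of all lines in the plane. -/
def Line : Type := {L : Set Pt // ∃ p v : Pt, v ≠ 0 ∧ L = lineThrough p v}

lemma mk_Line_le : #Line ≤ Cardinal.continuum := by
  have hf : Function.Surjective
      (fun q : {q : Pt × Pt // q.2 ≠ 0} =>
        (⟨lineThrough q.1.1 q.1.2, q.1.1, q.1.2, q.2, rfl⟩ : Line)) := by
    rintro ⟨L, p, v, hv, rfl⟩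
    exact ⟨⟨(p, v), hv⟩, rfl⟩
  calc #Line ≤ #{q : Pt × Pt // q.2 ≠ 0} := Cardinal.mk_le_of_surjective hf
    _ ≤ #(Pt × Pt) := Cardinal.mk_subtype_le _
    _ = Cardinal.continuum := by
        simp [Cardinal.mk_real, Cardinal.mul_eq_self Cardinal.aleph0_le_continuum]

noncomputable def j : Line ↪ (Cardinal.continuum.ord).ToType :=
  Classical.choice <| Cardinal.le_def _ _ |>.mp
    (by rw [Cardinal.mk_ord_toType]; exact mk_Line_le)

def rlt (A B : Line) : Prop := j A < j B

lemma rlt_wf : WellFounded rlt := InvImage.wf j wellFounded_lt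

lemma rlt_trans {A B C : Line} (h1 : rlt A B) (h2 : rlt B C) : rlt A C := lt_trans h1 h2

lemma mk_initial_lt (L : Line) : #{L' : Line // rlt L' L} < Cardinal.continuum := by
  have hinj : Function.Injective
      (fun A : {L' : Line // rlt L' L} => (⟨j A.1, A.2⟩ : Set.Iio (j L))) := by
    rintro ⟨A, hA⟩ ⟨B, hB⟩ h
    have : j A = j B := congrArg Subtype.val h
    exact Subtype.ext (j.injective this)
  exact lt_of_le_of_lt (Cardinal.mk_le_of_injective hinj) (Cardinal.mk_Iio_ord_toType _)

open Classical in
noncomputable def chosen : Line → Set Pt :=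
  rlt_wf.fix (fun L prev =>
    if h : ∃ N, Spec (⋃ L', ⋃ h' : rlt L' L, prev L' h') L.1 N then h.choose else ∅)

/-- The union of all points chosen at earlier stages. -/
def Slt (L : Line) : Set Pt := ⋃ L', ⋃ _h : rlt L' L, chosen L'

/-- The union of all points chosen at stages up to and including `L`. -/
def Sle (L : Line) : Set Pt := Slt L ∪ chosen L

open Classical in
lemma chosen_eq (L : Line) :
    chosen L = if h : ∃ N, Spec (Slt L) L.1 N then h.choose else ∅ := by
  rw [chosen, WellFounded.fix_eq]
  rfl

lemma sle_subset_slt {A B : Line} (h : rlt A B) : Sle A ⊆ Slt B := by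
  apply Set.union_subset
  · intro x hx
    simp only [Slt, Set.mem_iUnion] at hx ⊢
    obtain ⟨A', hA', hx⟩ := hx
    exact ⟨A', rlt_trans hA' h, hx⟩
  · intro x hx
    simp only [Slt, Set.mem_iUnion]
    exact ⟨A, h, hx⟩

lemma sle_comparable (A B : Line) : Sle A ⊆ Sle B ∨ Sle B ⊆ Sle A := by
  rcases lt_trichotomy (j A) (j B) with h | h | h
  · exact Or.inl ((sle_subset_slt h).trans Set.subset_union_left)
  · rw [j.injective h]
    exact Or.inl subset_rfl
  · exact Or.inr ((sle_subset_slt h).trans Set.subset_union_left)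

lemma good_union {pred : Line → Prop} (hI : ∀ M, pred M → Spec (Slt M) M.1 (chosen M)) :
    Good (⋃ M, ⋃ _h : pred M, chosen M) := by
  intro x hx y hy z hz hxy hxz hyz hcoll
  simp only [Set.mem_iUnion] at hx hy hz
  obtain ⟨Mx, pMx, hx⟩ := hx
  obtain ⟨My, pMy, hy⟩ := hy
  obtain ⟨Mz, pMz, hz⟩ := hz
  have cx : x ∈ Sle Mx := Or.inr hx
  have cy : y ∈ Sle My := Or.inr hy
  have cz : z ∈ Sle Mz := Or.inr hz
  have key : ∃ M, pred M ∧ x ∈ Sle M ∧ y ∈ Sle M ∧ z ∈ Sle M := by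
    rcases sle_comparable Mx My with h1 | h1
    · rcases sle_comparable My Mz with h2 | h2
      · exact ⟨Mz, pMz, h2 (h1 cx), h2 cy, cz⟩
      · exact ⟨My, pMy, h1 cx, cy, h2 cz⟩
    · rcases sle_comparable Mx Mz with h2 | h2
      · exact ⟨Mz, pMz, h2 cx, h2 (h1 cy), cz⟩
      · exact ⟨Mx, pMx, cx, h1 cy, h2 cz⟩
  obtain ⟨M, pM, hxM, hyM, hzM⟩ := key
  exact (hI M pM).2.2.1 x hxM y hyM z hzM hxy hxz hyz hcoll

lemma invA : ∀ L : Line, Spec (Slt L) L.1 (chosen L) := by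
  intro L
  induction L using rlt_wf.induction with
  | _ L ih =>
    have hslt : Slt L = ⋃ L', ⋃ _h : rlt L' L, chosen L' := rfl
    have hcard : #(Slt L) < Cardinal.continuum := by
      have : Slt L = ⋃ L' : {L' : Line // rlt L' L}, chosen L'.1 := by
        rw [hslt]
        exact Set.biUnion_eq_iUnion {L' | rlt L' L} (fun L' _ => chosen L')
      rw [this]
      refine lt_of_le_of_lt (Cardinal.mk_iUnion_le _) ?_
      have hsup : ⨆ L' : {L' : Line // rlt L' L}, #(chosen L'.1) ≤ Cardinal.aleph0 :=
        ciSup_le' fun L' => ((ih L'.1 L'.2).2.1.lt_aleph0).le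
      calc #{L' : Line // rlt L' L} * ⨆ L' : {L' : Line // rlt L' L}, #(chosen L'.1)
          ≤ #{L' : Line // rlt L' L} * Cardinal.aleph0 := mul_le_mul_right hsup _
        _ < Cardinal.continuum := Cardinal.mul_lt_of_lt Cardinal.aleph0_le_continuum
            (mk_initial_lt L) Cardinal.aleph0_lt_continuum
    have hgood : Good (Slt L) := by
      rw [hslt]
      exact good_union (fun M hM => ih M hM)
    obtain ⟨p, v, hv, hL⟩ := L.2
    have hex : ∃ N, Spec (Slt L) L.1 N := by
      rw [hL]
      exact exists_spec hv hcard hgood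
    rw [chosen_eq, dif_pos hex]
    exact hex.choose_spec

/-- The two-point set. -/
def S : Set Pt := ⋃ M : Line, ⋃ _h : True, chosen M

lemma good_S : Good S := good_union (fun M _ => invA M)

end TwoPt

/-- There is a planar set meeting every line in exactly two points. -/
theorem stmt_1 :
    ∃ S : Set (ℝ × ℝ), ∀ p v : ℝ × ℝ, v ≠ 0 →
      ∃ a b : ℝ × ℝ, a ≠ b ∧ S ∩ lineThrough p v = {a, b} := by
  refine ⟨TwoPt.S, fun p v hv => ?_⟩
  set L : TwoPt.Line := ⟨lineThrough p v, p, v, hv, rfl⟩ with hLdef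
  obtain ⟨hsub, hfin, hgood, a, b, hab, ha, hb⟩ := TwoPt.invA L
  have hSle : TwoPt.Slt L ∪ TwoPt.chosen L ⊆ TwoPt.S := by
    apply Set.union_subset
    · intro x hx
      simp only [TwoPt.Slt, Set.mem_iUnion] at hx
      obtain ⟨M, _, hx⟩ := hx
      exact Set.mem_iUnion.mpr ⟨M, Set.mem_iUnion.mpr ⟨trivial, hx⟩⟩
    · intro x hx
      exact Set.mem_iUnion.mpr ⟨L, Set.mem_iUnion.mpr ⟨trivial, hx⟩⟩
  have haS : a ∈ TwoPt.S ∩ lineThrough p v := ⟨hSle ha.1, ha.2⟩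
  have hbS : b ∈ TwoPt.S ∩ lineThrough p v := ⟨hSle hb.1, hb.2⟩
  refine ⟨a, b, hab, Set.Subset.antisymm ?_ ?_⟩
  · rintro z ⟨hzS, hzL⟩
    by_contra hz
    simp only [Set.mem_insert_iff, Set.mem_singleton_iff] at hz
    push_neg at hz
    obtain ⟨hza, hzb⟩ := hz
    exact TwoPt.good_S a haS.1 b hbS.1 z hzS hab (Ne.symm hza) (Ne.symm hzb)
      ⟨p, v, hv, haS.2, hbS.2, hzL⟩
  · rintro z (rfl | rfl)
    · exact haS
    · exact hbS
end

section
/- Let A be a convex subset of a real vector space and f : A → W a map into a real vector space W that preserves barycentric coordinates on segments, i.e., f((1-λ)a + λb) = (1-λ)f(a) + λ f(b) for all a,b ∈ A and λ ∈ [0,1]. Then f extends uniquely to an affine transformation from the affine span of A to W. -/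
/-!
Composed with any linear functional, `f` is both convex and concave on `A`, so Jensen's
inequality holds with equality and `f` preserves all convex combinations of points of `A`.
Splitting coefficients into positive and negative parts, `f` then respects every affine
relation `∑ cᵢ zᵢ = 0`, `∑ cᵢ = 0` among points of `A`. This says that the formal combination
map `l ↦ ∑ lₐ • f a` factors linearly through `l ↦ (∑ lₐ • a, ∑ lₐ) ∈ V × ℝ`; the factor,
restricted to `V × {1}`, is the affine extension. Uniqueness holds on the affine span since
affine maps agreeing on a set agree on its span.
-/

open Finset

theorem LinearMap.exists_comp_eq_of_ker_le {K M V W : Type*} [Field K] [AddCommGroup M]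
    [Module K M] [AddCommGroup V] [Module K V] [AddCommGroup W] [Module K W]
    (F : M →ₗ[K] V) (G : M →ₗ[K] W) (h : ker F ≤ ker G) : ∃ ψ : V →ₗ[K] W, ψ ∘ₗ F = G := by
  obtain ⟨ψ, hψ⟩ :=
    LinearMap.exists_extend ((ker F).liftQ G h ∘ₗ F.quotKerEquivRange.symm.toLinearMap)
  refine ⟨ψ, LinearMap.ext fun m => ?_⟩
  have := LinearMap.congr_fun hψ ⟨F m, mem_range_self F m⟩
  simpa [LinearMap.quotKerEquivRange_symm_apply_image] using this

section

variable {V W : Type*} [AddCommGroup V] [Module ℝ V] [AddCommGroup W] [Module ℝ W]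

def IsAffineOn (A : Set V) (f : V → W) : Prop :=
  ∀ a ∈ A, ∀ b ∈ A, ∀ lam : ℝ, lam ∈ Set.Icc (0:ℝ) 1 →
    f ((1 - lam) • a + lam • b) = (1 - lam) • f a + lam • f b

namespace IsAffineOn

variable {A : Set V} {f : V → W}

theorem map_add_smul (hf : IsAffineOn A f) {a b : V} (ha : a ∈ A) (hb : b ∈ A) {s t : ℝ}
    (hs : 0 ≤ s) (ht : 0 ≤ t) (hst : s + t = 1) : f (s • a + t • b) = s • f a + t • f b := by
  obtain rfl : s = 1 - t := by linarith
  exact hf a ha b hb t ⟨ht, by linarith⟩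

theorem convexOn_comp (hf : IsAffineOn A f) (hA : Convex ℝ A) (φ : Module.Dual ℝ W) :
    ConvexOn ℝ A (φ ∘ f) :=
  ⟨hA, fun _ ha _ hb _ _ hs ht hst => by simp [hf.map_add_smul ha hb hs ht hst]⟩

theorem concaveOn_comp (hf : IsAffineOn A f) (hA : Convex ℝ A) (φ : Module.Dual ℝ W) :
    ConcaveOn ℝ A (φ ∘ f) :=
  ⟨hA, fun _ ha _ hb _ _ hs ht hst => by simp [hf.map_add_smul ha hb hs ht hst]⟩

variable {ι : Type*} {t : Finset ι} {w : ι → ℝ} {z : ι → V}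

theorem map_centerMass (hf : IsAffineOn A f) (hA : Convex ℝ A) (hw₀ : ∀ i ∈ t, 0 ≤ w i)
    (hw : 0 < ∑ i ∈ t, w i) (hz : ∀ i ∈ t, z i ∈ A) :
    f (t.centerMass w z) = t.centerMass w (f ∘ z) := by
  rw [← sub_eq_zero, ← Module.forall_dual_apply_eq_zero_iff ℝ]
  intro φ
  have := le_antisymm ((hf.convexOn_comp hA φ).map_centerMass_le hw₀ hw hz)
    ((hf.concaveOn_comp hA φ).le_map_centerMass hw₀ hw hz)
  simpa [sub_eq_zero, centerMass, map_sum] using this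

theorem sum_smul_map_eq (hf : IsAffineOn A f) (hA : Convex ℝ A) (hw₀ : ∀ i ∈ t, 0 ≤ w i)
    (hz : ∀ i ∈ t, z i ∈ A) :
    ∑ i ∈ t, w i • f (z i) = (∑ i ∈ t, w i) • f (t.centerMass w z) := by
  rcases (sum_nonneg hw₀).eq_or_lt with hw | hw
  · have hw0 := (sum_eq_zero_iff_of_nonneg hw₀).1 hw.symm
    rw [← hw, zero_smul]
    exact sum_eq_zero fun i hi => by rw [hw0 i hi, zero_smul]
  · rw [hf.map_centerMass hA hw₀ hw hz, centerMass, smul_inv_smul₀ hw.ne']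
    rfl

theorem sum_smul_map_eq_zero (hf : IsAffineOn A f) (hA : Convex ℝ A) {c : ι → ℝ}
    (hz : ∀ i ∈ t, z i ∈ A) (hc : ∑ i ∈ t, c i = 0) (hcz : ∑ i ∈ t, c i • z i = 0) :
    ∑ i ∈ t, c i • f (z i) = 0 := by
  have hsum : ∑ i ∈ t, (c i)⁺ = ∑ i ∈ t, (c i)⁻ := by
    rw [← sub_eq_zero, ← sum_sub_distrib, ← hc]
    simp only [posPart_sub_negPart]
  have hcomb : ∑ i ∈ t, (c i)⁺ • z i = ∑ i ∈ t, (c i)⁻ • z i := by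
    rw [← sub_eq_zero, ← sum_sub_distrib, ← hcz]
    simp only [← sub_smul, posPart_sub_negPart]
  have hcm : t.centerMass (fun i => (c i)⁺) z = t.centerMass (fun i => (c i)⁻) z := by
    simp only [centerMass, hsum, hcomb]
  calc ∑ i ∈ t, c i • f (z i)
      = ∑ i ∈ t, (c i)⁺ • f (z i) - ∑ i ∈ t, (c i)⁻ • f (z i) := by
        simp only [← sum_sub_distrib, ← sub_smul, posPart_sub_negPart]
    _ = 0 := by
      rw [hf.sum_smul_map_eq hA (fun i _ => posPart_nonneg _) hz,
        hf.sum_smul_map_eq hA (fun i _ => negPart_nonneg _) hz, hsum, hcm, sub_self]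

theorem exists_affineMap_eqOn (hf : IsAffineOn A f) (hA : Convex ℝ A) :
    ∃ g : V →ᵃ[ℝ] W, Set.EqOn g f A := by
  let F : (A →₀ ℝ) →ₗ[ℝ] V × ℝ := Finsupp.linearCombination ℝ fun a => ((a : V), 1)
  let G : (A →₀ ℝ) →ₗ[ℝ] W := Finsupp.linearCombination ℝ fun a => f a
  have hker : LinearMap.ker F ≤ LinearMap.ker G := by
    intro l hl
    simp only [LinearMap.mem_ker, Finsupp.linearCombination_apply, Finsupp.sum, Prod.smul_mk,
      smul_eq_mul, mul_one, Prod.ext_iff, Prod.fst_sum, Prod.fst_zero, Prod.snd_sum,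
      Prod.snd_zero, F, G] at hl ⊢
    exact hf.sum_smul_map_eq_zero hA (fun a _ => a.2) hl.2 hl.1
  obtain ⟨ψ, hψ⟩ := F.exists_comp_eq_of_ker_le G hker
  refine ⟨ψ.toAffineMap.comp ((AffineMap.id ℝ V).prod (AffineMap.const ℝ V 1)), fun a ha => ?_⟩
  simpa [F, G] using LinearMap.congr_fun hψ (Finsupp.single ⟨a, ha⟩ 1)

end IsAffineOn

end

/-- A map on a convex set preserving barycentric coordinates on segments
extends to an affine map, uniquely so on the affine span of the set. -/
theorem stmt_3 (V W : Type*) [AddCommGroup V] [Module ℝ V] [AddCommGroup W] [Module ℝ W]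
    (A : Set V) (hA : Convex ℝ A) (f : V → W)
    (hf : ∀ a ∈ A, ∀ b ∈ A, ∀ lam : ℝ, lam ∈ Set.Icc (0:ℝ) 1 →
      f ((1 - lam) • a + lam • b) = (1 - lam) • f a + lam • f b) :
    ∃ g : V →ᵃ[ℝ] W, (∀ a ∈ A, g a = f a) ∧
      ∀ g' : V →ᵃ[ℝ] W, (∀ a ∈ A, g' a = f a) →
        Set.EqOn (g' : V → W) (g : V → W) (affineSpan ℝ A : Set V) := by
  obtain ⟨g, hg⟩ := IsAffineOn.exists_affineMap_eqOn (A := A) hf hA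
  exact ⟨g, fun a ha => hg ha, fun g' hg' =>
    AffineMap.eqOn_affineSpan fun a ha => (hg' a ha).trans (hg ha).symm⟩
end

section
/- Let Δ = [a,b,c] be a triangle in ℝ². The map f : Δ → Δ defined by f(x) = x if x ∈ [a,b] and f(x) = c otherwise is monotone for euclidean betweenness. -/
/-!
The segment `[a, b]` is a face of the triangle: it is the zero set of the barycentric coordinate
of `c`, which is nonnegative on the triangle. Collapsing the complement of a convex face `F` to a
point `c` preserves betweenness: a segment whose interior meets `F` has both endpoints in `F`,
and a segment with an endpoint off `F` is mapped to a segment having `c` as an endpoint.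
-/

open Set

section

variable {𝕜 E : Type*} [Field 𝕜] [LinearOrder 𝕜] [IsStrictOrderedRing 𝕜] [AddCommGroup E]
  [Module 𝕜 E]

theorem isExtreme_setOf_eq_zero_of_nonneg {A : Set E} (φ : E →ᵃ[𝕜] 𝕜)
    (hφ : ∀ x ∈ A, 0 ≤ φ x) : IsExtreme 𝕜 A {x ∈ A | φ x = 0} := by
  refine ⟨fun x hx => hx.1, ?_⟩
  rintro p hp q hq x ⟨-, hx0⟩ ⟨t, s, ht, hs, hts, rfl⟩
  rw [Convex.combo_affine_apply hts, smul_eq_mul, smul_eq_mul] at hx0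
  refine ⟨hp, ?_⟩
  nlinarith [mul_nonneg ht.le (hφ p hp), mul_nonneg hs.le (hφ q hq)]

theorem IsExtreme.apply_mem_segment {A F : Set E} (hAF : IsExtreme 𝕜 A F) (hF : Convex 𝕜 F)
    {f : E → E} {c : E} (hfF : ∀ x ∈ F, f x = x) (hfc : ∀ x ∉ F, f x = c)
    {p q x : E} (hp : p ∈ A) (hq : q ∈ A) (hx : x ∈ segment 𝕜 p q) :
    f x ∈ segment 𝕜 (f p) (f q) := by
  by_cases hxF : x ∈ F
  · rw [← insert_endpoints_openSegment] at hx
    rcases hx with rfl | rfl | hx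
    · exact left_mem_segment 𝕜 _ _
    · exact right_mem_segment 𝕜 _ _
    · rw [hfF x hxF, hfF p (hAF.left_mem_of_mem_openSegment hp hq hxF hx),
        hfF q (hAF.right_mem_of_mem_openSegment hp hq hxF hx)]
      exact openSegment_subset_segment 𝕜 p q hx
  · rw [hfc x hxF]
    by_cases hpF : p ∈ F
    · by_cases hqF : q ∈ F
      · exact absurd (hF.segment_subset hpF hqF hx) hxF
      · rw [hfc q hqF]
        exact right_mem_segment 𝕜 _ _
    · rw [hfc p hpF]
      exact left_mem_segment 𝕜 _ _

namespace AffineBasis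

theorem segment_eq_setOf_coord_eq_zero (T : AffineBasis (Fin 3) 𝕜 E) :
    segment 𝕜 (T 0) (T 1) = {x ∈ convexHull 𝕜 (range T) | T.coord 2 x = 0} := by
  ext x
  constructor
  · intro hx
    refine ⟨segment_subset_convexHull (mem_range_self 0) (mem_range_self 1) hx, ?_⟩
    obtain ⟨t, s, -, -, hts, rfl⟩ := hx
    rw [Convex.combo_affine_apply hts, T.coord_apply_ne (by decide),
      T.coord_apply_ne (by decide), smul_zero, smul_zero, add_zero]
  · rintro ⟨hx, hx2⟩
    rw [T.convexHull_eq_nonneg_coord] at hx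
    have hsum := T.sum_coord_apply_eq_one x
    have hcomb := T.linear_combination_coord_eq_self x
    rw [Fin.sum_univ_three, hx2] at hsum hcomb
    rw [zero_smul, add_zero] at hcomb
    exact ⟨_, _, hx 0, hx 1, by rwa [add_zero] at hsum, hcomb⟩

theorem isExtreme_segment (T : AffineBasis (Fin 3) 𝕜 E) :
    IsExtreme 𝕜 (convexHull 𝕜 (range T)) (segment 𝕜 (T 0) (T 1)) := by
  rw [segment_eq_setOf_coord_eq_zero]
  refine isExtreme_setOf_eq_zero_of_nonneg (T.coord 2) fun x hx => ?_
  rw [T.convexHull_eq_nonneg_coord] at hx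
  exact hx 2

end AffineBasis

end

open Classical in
/-- On a triangle Δ = [a,b,c], the map which is the identity on the
segment [a,b] and constantly c elsewhere is monotone for euclidean betweenness. -/
theorem stmt_7 (a b c : ℝ × ℝ) (habc : AffineIndependent ℝ ![a, b, c])
    (Δ : Set (ℝ × ℝ)) (hΔ : Δ = convexHull ℝ {a, b, c})
    (f : ℝ × ℝ → ℝ × ℝ) (hf : ∀ x, f x = if x ∈ segment ℝ a b then x else c) :
    ∀ p q x, p ∈ Δ → q ∈ Δ → x ∈ Δ → x ∈ segment ℝ p q →
      f x ∈ segment ℝ (f p) (f q) := by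
  intro p q x hp hq _ hx
  have hspan : affineSpan ℝ (range ![a, b, c]) = ⊤ := by
    rw [habc.affineSpan_eq_top_iff_card_eq_finrank_add_one]
    simp
  have hface : IsExtreme ℝ Δ (segment ℝ a b) := by
    have : IsExtreme ℝ (convexHull ℝ (range ![a, b, c])) (segment ℝ a b) :=
      (⟨![a, b, c], habc, hspan⟩ : AffineBasis (Fin 3) ℝ (ℝ × ℝ)).isExtreme_segment
    rwa [Matrix.range_cons, Matrix.range_cons_cons_empty, singleton_union, ← hΔ] at this
  exact hface.apply_mem_segment (convex_segment a b) (fun y hy => by rw [hf, if_pos hy])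
    (fun y hy => by rw [hf, if_neg hy]) hp hq hx
end

section
/- Let Δ = [a,b,c] be a triangle in ℝ² and v a point of the open segment (b,c). The map g : Δ → Δ defined by g(a) = a, g(x) = b for x ≠ a in the triangle [a,b,v], and g(x) = c otherwise, is monotone for euclidean betweenness. -/
open Classical in

/-- On a triangle Δ = [a,b,c], with v in the open segment (b,c), the map
sending a to a, the rest of the triangle [a,b,v] to b, and everything else to c, is
monotone for euclidean betweenness. -/
theorem stmt_8 (a b c v : ℝ × ℝ) (habc : AffineIndependent ℝ ![a, b, c])
    (hv : v ∈ segment ℝ b c) (hvb : v ≠ b) (hvc : v ≠ c)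
    (Δ : Set (ℝ × ℝ)) (hΔ : Δ = convexHull ℝ {a, b, c})
    (g : ℝ × ℝ → ℝ × ℝ)
    (hg : ∀ x, g x = if x = a then a else if x ∈ convexHull ℝ {a, b, v} then b else c) :
    ∀ p q x, p ∈ Δ → q ∈ Δ → x ∈ Δ → x ∈ segment ℝ p q →
      g x ∈ segment ℝ (g p) (g q) := by
  classical
  -- an affine basis from the three vertices
  have htop : affineSpan ℝ (Set.range ![a, b, c]) = ⊤ := by
    rw [habc.affineSpan_eq_top_iff_card_eq_finrank_add_one]
    simp
  let B : AffineBasis (Fin 3) ℝ (ℝ × ℝ) := ⟨![a, b, c], habc, htop⟩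
  have hB0 : B 0 = a := rfl
  have hB1 : B 1 = b := rfl
  have hB2 : B 2 = c := rfl
  have hrange : Set.range (B : Fin 3 → ℝ × ℝ) = {a, b, c} := by
    show Set.range ![a, b, c] = {a, b, c}
    ext z
    constructor
    · rintro ⟨i, rfl⟩
      fin_cases i <;> simp
    · rintro (rfl | rfl | rfl)
      exacts [⟨0, rfl⟩, ⟨1, rfl⟩, ⟨2, rfl⟩]
  -- affine behaviour of coordinates
  have hco : ∀ (i : Fin 3) (t t' : ℝ) (p q : ℝ × ℝ), t + t' = 1 →
      B.coord i (t • p + t' • q) = t * B.coord i p + t' * B.coord i q := by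
    intro i t t' p q h
    rw [Convex.combo_affine_apply h]
    simp [smul_eq_mul]
  have hrep : ∀ z : ℝ × ℝ,
      B.coord 0 z • a + B.coord 1 z • b + B.coord 2 z • c = z := by
    intro z
    have h := B.linear_combination_coord_eq_self z
    rwa [Fin.sum_univ_three, hB0, hB1, hB2] at h
  have hsum : ∀ z : ℝ × ℝ, B.coord 0 z + B.coord 1 z + B.coord 2 z = 1 := by
    intro z
    have h := B.sum_coord_apply_eq_one z
    rwa [Fin.sum_univ_three] at h
  have hΔnn : ∀ z ∈ Δ, ∀ i : Fin 3, 0 ≤ B.coord i z := by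
    intro z hz i
    rw [hΔ, ← hrange, B.convexHull_eq_nonneg_coord] at hz
    exact hz i
  -- coordinates of the vertices
  have hβa : B.coord 1 a = 0 := by rw [← hB0]; exact B.coord_apply_ne (by decide)
  have hγa : B.coord 2 a = 0 := by rw [← hB0]; exact B.coord_apply_ne (by decide)
  have hβb : B.coord 1 b = 1 := by rw [← hB1]; exact B.coord_apply_eq 1
  have hγb : B.coord 2 b = 0 := by rw [← hB1]; exact B.coord_apply_ne (by decide)
  have hβc : B.coord 1 c = 0 := by rw [← hB2]; exact B.coord_apply_ne (by decide)
  have hγc : B.coord 2 c = 1 := by rw [← hB2]; exact B.coord_apply_eq 2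
  -- z = a iff its b,c coordinates vanish
  have hA : ∀ z : ℝ × ℝ, B.coord 1 z = 0 → B.coord 2 z = 0 → z = a := by
    intro z h1 h2
    have hα : B.coord 0 z = 1 := by have := hsum z; linarith
    have := hrep z
    rw [h1, h2, hα] at this
    simpa using this.symm
  -- the parameter of v on [b,c]
  obtain ⟨u, s, hu, hs0, hus, hveq⟩ := hv
  have hspos : 0 < s := by
    rcases hs0.lt_or_eq with h | h
    · exact h
    · exfalso; apply hvb
      rw [← hveq, ← h]
      have : u = 1 := by linarith
      simp [this]
  have hs1 : s < 1 := by
    rcases (show s ≤ 1 by linarith).lt_or_eq with h | h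
    · exact h
    · exfalso; apply hvc
      rw [← hveq, h]
      have : u = 0 := by linarith
      simp [this]
  have hβv : B.coord 1 v = 1 - s := by
    rw [← hveq, hco 1 u s b c hus, hβb, hβc]; linarith
  have hγv : B.coord 2 v = s := by
    rw [← hveq, hco 2 u s b c hus, hγb, hγc]; linarith
  -- the separating affine functional
  set F : ℝ × ℝ → ℝ := fun z => s * B.coord 1 z - (1 - s) * B.coord 2 z with hFdef
  have hFa : F a = 0 := by simp [hFdef, hβa, hγa]
  -- points of the small triangle have F ≥ 0
  have hF : ∀ z ∈ convexHull ℝ ({a, b, v} : Set (ℝ × ℝ)), 0 ≤ F z := by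
    intro z hz
    rw [show ({a, b, v} : Set (ℝ × ℝ)) = insert a {b, v} from rfl,
      convexHull_insert ⟨b, by simp⟩, convexHull_pair] at hz
    rw [mem_convexJoin] at hz
    obtain ⟨a', ha', y, hy, hzseg⟩ := hz
    rw [Set.mem_singleton_iff] at ha'
    rw [ha'] at hzseg
    obtain ⟨r₁, r₂, hr₁, hr₂, hr, hyeq⟩ := hy
    obtain ⟨t₁, t₂, ht₁, ht₂, ht, hzeq⟩ := hzseg
    have hβz : B.coord 1 z = t₂ * (r₁ + r₂ * (1 - s)) := by
      rw [← hzeq, hco 1 t₁ t₂ a y ht, hβa, ← hyeq, hco 1 r₁ r₂ b v hr, hβb, hβv]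
      ring
    have hγz : B.coord 2 z = t₂ * (r₂ * s) := by
      rw [← hzeq, hco 2 t₁ t₂ a y ht, hγa, ← hyeq, hco 2 r₁ r₂ b v hr, hγb, hγv]
      ring
    have key : F z = s * t₂ * r₁ := by rw [hFdef]; simp only; rw [hβz, hγz]; ring
    rw [key]
    positivity
  -- points of Δ with F ≥ 0 are in the small triangle
  have hG : ∀ z ∈ Δ, 0 ≤ F z → z ∈ convexHull ℝ ({a, b, v} : Set (ℝ × ℝ)) := by
    intro z hz hFz
    set az := B.coord 0 z
    set bz := B.coord 1 z
    set cz := B.coord 2 z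
    have hu' : u = 1 - s := by linarith
    have hν : (0 : ℝ) ≤ cz / s := div_nonneg (hΔnn z hz 2) hspos.le
    have hμ : (0 : ℝ) ≤ bz - cz / s * (1 - s) := by
      rw [sub_nonneg, div_mul_eq_mul_div, div_le_iff₀ hspos]
      have e : F z = s * bz - (1 - s) * cz := rfl
      rw [e] at hFz
      nlinarith [hFz]
    have hcs : cz / s * s = cz := div_mul_cancel₀ _ hspos.ne'
    have hzeq : az • a + (bz - cz / s * (1 - s)) • b + (cz / s) • v = z := by
      rw [← hveq, hu', smul_add, smul_smul, smul_smul, hcs]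
      have h := hrep z
      rw [show az • a + (bz - cz / s * (1 - s)) • b + ((cz / s * (1 - s)) • b + cz • c)
          = az • a + bz • b + cz • c by module]
      exact h
    have hmem := (convex_convexHull ℝ ({a, b, v} : Set (ℝ × ℝ))).sum_mem
      (t := (Finset.univ : Finset (Fin 3)))
      (w := ![az, bz - cz / s * (1 - s), cz / s]) (z := ![a, b, v])
      (by intro i _
          fin_cases i
          · exact hΔnn z hz 0
          · exact hμ
          · exact hν)
      (by rw [Fin.sum_univ_three]
          simp only [Matrix.cons_val_zero, Matrix.cons_val_one, Matrix.head_cons,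
            Matrix.cons_val_two, Matrix.tail_cons]
          have e : az + (bz - cz / s * (1 - s)) + cz / s = az + bz + cz := by
            field_simp
            ring
          rw [e]
          exact hsum z)
      (by intro i _
          fin_cases i <;> exact subset_convexHull ℝ _ (by simp))
    rw [Fin.sum_univ_three] at hmem
    simp only [Matrix.cons_val_zero, Matrix.cons_val_one, Matrix.head_cons,
      Matrix.cons_val_two, Matrix.tail_cons] at hmem
    rwa [hzeq] at hmem
  -- distinctness of vertices
  have hab : a ≠ b := by
    intro h
    exact (by decide : (0 : Fin 3) ≠ 1) (habc.injective (by simpa [h] using rfl))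
  -- main argument
  intro p q x hp hq hx hseg
  obtain ⟨t, t', ht, ht', htt, hxe⟩ := hseg
  rcases ht.lt_or_eq with htpos | htz
  swap
  · -- t = 0, x = q
    have : x = q := by rw [← hxe, ← htz]; have : t' = 1 := by linarith
                       simp [this]
    rw [this]; exact right_mem_segment ℝ _ _
  rcases ht'.lt_or_eq with ht'pos | ht'z
  swap
  · have : x = p := by rw [← hxe, ← ht'z]; have : t = 1 := by linarith
                       simp [this]
    rw [this]; exact left_mem_segment ℝ _ _
  have hFx : F x = t * F p + t' * F q := by
    rw [hFdef]; simp only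
    rw [← hxe, hco 1 t t' p q htt, hco 2 t t' p q htt]
    ring
  by_cases hxa : x = a
  · -- x = a : then p = a (since t > 0)
    have hβx : B.coord 1 x = 0 := by rw [hxa]; exact hβa
    have hγx : B.coord 2 x = 0 := by rw [hxa]; exact hγa
    have h1 : t * B.coord 1 p + t' * B.coord 1 q = 0 := by
      rw [← hco 1 t t' p q htt, hxe]; exact hβx
    have h2 : t * B.coord 2 p + t' * B.coord 2 q = 0 := by
      rw [← hco 2 t t' p q htt, hxe]; exact hγx
    have hβp : B.coord 1 p = 0 := by
      have e1 : 0 ≤ t * B.coord 1 p := mul_nonneg htpos.le (hΔnn p hp 1)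
      have e2 : 0 ≤ t' * B.coord 1 q := mul_nonneg ht'pos.le (hΔnn q hq 1)
      have e3 : t * B.coord 1 p = 0 := by linarith
      exact (mul_eq_zero.mp e3).resolve_left htpos.ne'
    have hγp : B.coord 2 p = 0 := by
      have e1 : 0 ≤ t * B.coord 2 p := mul_nonneg htpos.le (hΔnn p hp 2)
      have e2 : 0 ≤ t' * B.coord 2 q := mul_nonneg ht'pos.le (hΔnn q hq 2)
      have e3 : t * B.coord 2 p = 0 := by linarith
      exact (mul_eq_zero.mp e3).resolve_left htpos.ne'
    have hpa : p = a := hA p hβp hγp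
    rw [hg x, if_pos hxa, hg p, if_pos hpa]
    exact left_mem_segment ℝ _ _
  by_cases hxT : x ∈ convexHull ℝ ({a, b, v} : Set (ℝ × ℝ))
  · -- g x = b
    rw [hg x, if_neg hxa, if_pos hxT]
    have hFx0 : 0 ≤ F x := hF x hxT
    by_cases hpa : p = a
    · by_cases hqa : q = a
      · exfalso; apply hxa
        rw [← hxe, hpa, hqa, ← add_smul, htt, one_smul]
      by_cases hqT : q ∈ convexHull ℝ ({a, b, v} : Set (ℝ × ℝ))
      · rw [hg q, if_neg hqa, if_pos hqT]; exact right_mem_segment ℝ _ _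
      · exfalso
        have hFq : F q < 0 := not_le.mp (fun h => hqT (hG q hq h))
        have hFp : F p = 0 := by rw [hpa]; exact hFa
        rw [hFp] at hFx
        have := mul_neg_of_pos_of_neg ht'pos hFq
        nlinarith
    · by_cases hpT : p ∈ convexHull ℝ ({a, b, v} : Set (ℝ × ℝ))
      · rw [hg p, if_neg hpa, if_pos hpT]; exact left_mem_segment ℝ _ _
      · have hFp : F p < 0 := not_le.mp (fun h => hpT (hG p hp h))
        by_cases hqa : q = a
        · exfalso
          have hFq : F q = 0 := by rw [hqa]; exact hFa
          rw [hFq] at hFx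
          have := mul_neg_of_pos_of_neg htpos hFp
          nlinarith
        by_cases hqT : q ∈ convexHull ℝ ({a, b, v} : Set (ℝ × ℝ))
        · rw [hg q, if_neg hqa, if_pos hqT]; exact right_mem_segment ℝ _ _
        · exfalso
          have hFq : F q < 0 := not_le.mp (fun h => hqT (hG q hq h))
          have e1 := mul_neg_of_pos_of_neg htpos hFp
          have e2 := mul_neg_of_pos_of_neg ht'pos hFq
          linarith
  · -- g x = c
    rw [hg x, if_neg hxa, if_neg hxT]
    have hFx0 : F x < 0 := not_le.mp (fun h => hxT (hG x hx h))
    by_cases hpc : p ≠ a ∧ p ∉ convexHull ℝ ({a, b, v} : Set (ℝ × ℝ))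
    · rw [hg p, if_neg hpc.1, if_neg hpc.2]; exact left_mem_segment ℝ _ _
    · have hFp : 0 ≤ F p := by
        push_neg at hpc
        by_cases h : p = a
        · rw [h, hFa]
        · exact hF p (hpc h)
      by_cases hqc : q ≠ a ∧ q ∉ convexHull ℝ ({a, b, v} : Set (ℝ × ℝ))
      · rw [hg q, if_neg hqc.1, if_neg hqc.2]; exact right_mem_segment ℝ _ _
      · exfalso
        have hFq : 0 ≤ F q := by
          push_neg at hqc
          by_cases h : q = a
          · rw [h, hFa]
          · exact hF q (hqc h)
        have e1 := mul_nonneg htpos.le hFp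
        have e2 := mul_nonneg ht'pos.le hFq
        linarith
end

section
/- Define f : [0,1]² → ℝ² by f(x₀,x₁) = (0,1) if x₀ < x₁; (1,0) if x₀ > x₁; (1/2,1/2) if 0 < x₀ = x₁ < 1; (0,0) if x₀ = x₁ = 0; and (1,1) if x₀ = x₁ = 1. Then f is monotone for euclidean betweenness, and its image is the five-point set {(0,0),(1,0),(0,1),(1,1),(1/2,1/2)}. -/
/-- The five-valued map on the unit square is monotone and its image is
the five-point set {(0,0),(1,0),(0,1),(1,1),(1/2,1/2)}. -/
theorem stmt_9 (f : ℝ × ℝ → ℝ × ℝ)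
    (hf : ∀ x : ℝ × ℝ, f x =
      if x.1 < x.2 then (0, 1)
      else if x.2 < x.1 then (1, 0)
      else if x.1 = 0 then (0, 0)
      else if x.1 = 1 then (1, 1)
      else (1/2, 1/2))
    (Q : Set (ℝ × ℝ)) (hQ : Q = Set.Icc ((0 : ℝ), (0 : ℝ)) (1, 1)) :
    (∀ a b s, a ∈ Q → b ∈ Q → s ∈ Q → s ∈ segment ℝ a b →
      f s ∈ segment ℝ (f a) (f b)) ∧
    f '' Q = {((0:ℝ), (0:ℝ)), (1, 0), (0, 1), (1, 1), (1/2, 1/2)} := by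
  subst hQ
  have hmid : ∀ p q : ℝ × ℝ, ((1:ℝ)/2, (1:ℝ)/2) = (1/2 : ℝ) • p + (1/2 : ℝ) • q →
      (((1:ℝ)/2, (1:ℝ)/2) : ℝ × ℝ) ∈ segment ℝ p q := by
    intro p q h
    exact ⟨1/2, 1/2, by norm_num, by norm_num, by norm_num, h.symm⟩
  constructor
  · rintro a b s ha hb hs ⟨u, v, hu, hv, huv, hsum⟩
    rcases eq_or_lt_of_le hu with hu0 | hu0
    · have hv1 : v = 1 := by linarith
      have hsb : s = b := by rw [← hsum, ← hu0, hv1]; simp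
      rw [hsb]; exact right_mem_segment ℝ _ _
    rcases eq_or_lt_of_le hv with hv0 | hv0
    · have hu1 : u = 1 := by linarith
      have hsa : s = a := by rw [← hsum, ← hv0, hu1]; simp
      rw [hsa]; exact left_mem_segment ℝ _ _
    have hs1 : s.1 = u * a.1 + v * b.1 := by rw [← hsum]; rfl
    have hs2 : s.2 = u * a.2 + v * b.2 := by rw [← hsum]; rfl
    have ha1 : (0:ℝ) ≤ a.1 := ha.1.1
    have ha2 : (0:ℝ) ≤ a.2 := ha.1.2
    have ha1' : a.1 ≤ 1 := ha.2.1
    have ha2' : a.2 ≤ 1 := ha.2.2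
    have hb1 : (0:ℝ) ≤ b.1 := hb.1.1
    have hb2 : (0:ℝ) ≤ b.2 := hb.1.2
    have hb1' : b.1 ≤ 1 := hb.2.1
    have hb2' : b.2 ≤ 1 := hb.2.2
    rcases lt_trichotomy s.1 s.2 with h1 | h1 | h1
    · have hfs : f s = (0,1) := by rw [hf, if_pos h1]
      have hab : a.1 < a.2 ∨ b.1 < b.2 := by
        by_contra hc
        push_neg at hc
        nlinarith [hc.1, hc.2]
      rcases hab with h | h
      · have hfa : f a = (0,1) := by rw [hf, if_pos h]
        rw [hfs, ← hfa]; exact left_mem_segment ℝ _ _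
      · have hfb : f b = (0,1) := by rw [hf, if_pos h]
        rw [hfs, ← hfb]; exact right_mem_segment ℝ _ _
    · -- diagonal
      by_cases hz : s.1 = 0
      · have hfs : f s = (0,0) := by rw [hf, ← h1]; simp [hz]
        have h5 : u * a.1 = 0 := by
          nlinarith [mul_nonneg hu0.le ha1, mul_nonneg hv0.le hb1]
        have h6 : u * a.2 = 0 := by
          have hz2 : s.2 = 0 := h1 ▸ hz
          nlinarith [mul_nonneg hu0.le ha2, mul_nonneg hv0.le hb2]
        have ha1z : a.1 = 0 := by
          rcases mul_eq_zero.mp h5 with h | h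
          · exact absurd h hu0.ne'
          · exact h
        have ha2z : a.2 = 0 := by
          rcases mul_eq_zero.mp h6 with h | h
          · exact absurd h hu0.ne'
          · exact h
        have hfa : f a = (0,0) := by rw [hf]; simp [ha1z, ha2z]
        rw [hfs, ← hfa]; exact left_mem_segment ℝ _ _
      by_cases ho : s.1 = 1
      · have hfs : f s = (1,1) := by rw [hf, ← h1]; simp [ho]
        have h5 : u * a.1 = u * 1 := by
          nlinarith [mul_le_of_le_one_right hv0.le hb1', mul_le_of_le_one_right hu0.le ha1']
        have h6 : u * a.2 = u * 1 := by
          have ho2 : s.2 = 1 := h1 ▸ ho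
          nlinarith [mul_le_of_le_one_right hv0.le hb2', mul_le_of_le_one_right hu0.le ha2']
        have ha1o : a.1 = 1 := mul_left_cancel₀ hu0.ne' h5
        have ha2o : a.2 = 1 := mul_left_cancel₀ hu0.ne' h6
        have hfa : f a = (1,1) := by rw [hf]; simp [ha1o, ha2o]
        rw [hfs, ← hfa]; exact left_mem_segment ℝ _ _
      have hfs : f s = (1/2, 1/2) := by rw [hf, ← h1]; simp [hz, ho]
      rcases lt_trichotomy a.1 a.2 with h2 | h2 | h2
      · have h3 : b.2 < b.1 := by nlinarith [mul_pos hu0 (sub_pos.mpr h2)]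
        have hfa : f a = (0,1) := by rw [hf, if_pos h2]
        have hfb : f b = (1,0) := by rw [hf, if_neg (not_lt.mpr h3.le), if_pos h3]
        rw [hfs, hfa, hfb]
        apply hmid
        norm_num [Prod.ext_iff]
      · have h4 : v * b.1 = v * b.2 := by
          rw [h2] at hs1; linarith
        have hbeq : b.1 = b.2 := mul_left_cancel₀ hv0.ne' h4
        by_cases ha0 : a.1 = 0
        · have ha20 : a.2 = 0 := h2 ▸ ha0
          have hfa : f a = (0,0) := by rw [hf]; simp [ha0, ha20]
          by_cases hb0 : b.1 = 0
          · exfalso; apply hz; rw [hs1, ha0, hb0]; ring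
          by_cases hbo : b.1 = 1
          · have hfb : f b = (1,1) := by rw [hf, ← hbeq]; simp [hbo]
            rw [hfs, hfa, hfb]
            apply hmid
            norm_num [Prod.ext_iff]
          · have hfb : f b = (1/2,1/2) := by rw [hf, ← hbeq]; simp [hb0, hbo]
            rw [hfs, ← hfb]; exact right_mem_segment ℝ _ _
        by_cases hao : a.1 = 1
        · have ha2o : a.2 = 1 := h2 ▸ hao
          have hfa : f a = (1,1) := by rw [hf]; simp [hao, ha2o]
          by_cases hbo : b.1 = 1
          · exfalso; apply ho; rw [hs1, hao, hbo]; linarith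
          by_cases hb0 : b.1 = 0
          · have hfb : f b = (0,0) := by rw [hf, ← hbeq]; simp [hb0]
            rw [hfs, hfa, hfb]
            apply hmid
            norm_num [Prod.ext_iff]
          · have hfb : f b = (1/2,1/2) := by rw [hf, ← hbeq]; simp [hb0, hbo]
            rw [hfs, ← hfb]; exact right_mem_segment ℝ _ _
        · have hfa : f a = (1/2,1/2) := by rw [hf, ← h2]; simp [ha0, hao]
          rw [hfs, ← hfa]; exact left_mem_segment ℝ _ _
      · have h3 : b.1 < b.2 := by nlinarith [mul_pos hu0 (sub_pos.mpr h2)]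
        have hfa : f a = (1,0) := by rw [hf, if_neg (not_lt.mpr h2.le), if_pos h2]
        have hfb : f b = (0,1) := by rw [hf, if_pos h3]
        rw [hfs, hfa, hfb]
        apply hmid
        norm_num [Prod.ext_iff]
    · have hfs : f s = (1,0) := by rw [hf, if_neg (not_lt.mpr h1.le), if_pos h1]
      have hab : b.2 < b.1 ∨ a.2 < a.1 := by
        by_contra hc
        push_neg at hc
        nlinarith [hc.1, hc.2]
      rcases hab with h | h
      · have hfb : f b = (1,0) := by rw [hf, if_neg (not_lt.mpr h.le), if_pos h]
        rw [hfs, ← hfb]; exact right_mem_segment ℝ _ _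
      · have hfa : f a = (1,0) := by rw [hf, if_neg (not_lt.mpr h.le), if_pos h]
        rw [hfs, ← hfa]; exact left_mem_segment ℝ _ _
  · ext x
    simp only [Set.mem_image, Set.mem_insert_iff, Set.mem_singleton_iff]
    constructor
    · rintro ⟨y, hy, rfl⟩
      rw [hf]
      split_ifs <;> simp
    · rintro (rfl | rfl | rfl | rfl | rfl)
      · exact ⟨(0,0), by norm_num [Set.mem_Icc, Prod.le_def], by rw [hf]; norm_num⟩
      · exact ⟨(1,0), by norm_num [Set.mem_Icc, Prod.le_def], by rw [hf]; norm_num⟩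
      · exact ⟨(0,1), by norm_num [Set.mem_Icc, Prod.le_def], by rw [hf]; norm_num⟩
      · exact ⟨(1,1), by norm_num [Set.mem_Icc, Prod.le_def], by rw [hf]; norm_num⟩
      · exact ⟨(1/2,1/2), by norm_num [Set.mem_Icc, Prod.le_def], by rw [hf]; norm_num⟩
end

section
/- Let G ⊆ ℝ² be convex, f : G → ℝ² monotone, and suppose f(G) is not contained in the union of a line and a single point, and f(G) has empty interior. Then f(G) contains four convex independent points. -/
/-- A set is convex independent if none of its points lies in the convex hull of the
others. -/
def ConvexIndep (s : Set (ℝ × ℝ)) : Prop := ∀ x ∈ s, x ∉ convexHull ℝ (s \ {x})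

open Set AffineMap

namespace MonotoneImage

/-- Twice the signed area of the triangle `ABC`: its sign tells on which side of the line `AB`
the point `C` lies. -/
def orient (A B C : ℝ × ℝ) : ℝ := (B.1 - A.1) * (C.2 - A.2) - (B.2 - A.2) * (C.1 - A.1)

@[simp] lemma orient_self_left (A C : ℝ × ℝ) : orient A A C = 0 := by simp only [orient]; ring
@[simp] lemma orient_self_right (A B : ℝ × ℝ) : orient A B B = 0 := by simp only [orient]; ring
@[simp] lemma orient_self_ends (A B : ℝ × ℝ) : orient A B A = 0 := by simp only [orient]; ring

lemma orient_rotate (A B C : ℝ × ℝ) : orient B C A = orient A B C := by simp only [orient]; ring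

lemma orient_swap (A B C : ℝ × ℝ) : orient B A C = -orient A B C := by simp only [orient]; ring

lemma orient_swap_right (A B C : ℝ × ℝ) : orient A C B = -orient A B C := by
  simp only [orient]; ring

lemma orient_lineMap_left (X Y B C : ℝ × ℝ) (t : ℝ) :
    orient (lineMap X Y t) B C = (1 - t) * orient X B C + t * orient Y B C := by
  simp only [orient, lineMap_apply_module, Prod.fst_add, Prod.snd_add, Prod.smul_fst,
    Prod.smul_snd, smul_eq_mul]
  ring

lemma orient_lineMap_mid (A X Y C : ℝ × ℝ) (t : ℝ) :
    orient A (lineMap X Y t) C = (1 - t) * orient A X C + t * orient A Y C := by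
  simp only [orient, lineMap_apply_module, Prod.fst_add, Prod.snd_add, Prod.smul_fst,
    Prod.smul_snd, smul_eq_mul]
  ring

lemma orient_lineMap_right (A B X Y : ℝ × ℝ) (t : ℝ) :
    orient A B (lineMap X Y t) = (1 - t) * orient A B X + t * orient A B Y := by
  simp only [orient, lineMap_apply_module, Prod.fst_add, Prod.snd_add, Prod.smul_fst,
    Prod.smul_snd, smul_eq_mul]
  ring

lemma exists_eq_lineMap_of_orient_eq_zero {A B C : ℝ × ℝ} (hAB : A ≠ B)
    (h : orient A B C = 0) : ∃ t : ℝ, C = lineMap A B t := by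
  have hn : (B.1 - A.1) ^ 2 + (B.2 - A.2) ^ 2 ≠ 0 := fun hn =>
    hAB (Prod.ext (by nlinarith [sq_nonneg (B.1 - A.1), sq_nonneg (B.2 - A.2)])
      (by nlinarith [sq_nonneg (B.1 - A.1), sq_nonneg (B.2 - A.2)]))
  refine ⟨((C.1 - A.1) * (B.1 - A.1) + (C.2 - A.2) * (B.2 - A.2)) /
    ((B.1 - A.1) ^ 2 + (B.2 - A.2) ^ 2), Prod.ext ?_ ?_⟩ <;>
  simp only [orient, lineMap_apply_module', Prod.fst_add, Prod.snd_add, Prod.smul_fst,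
    Prod.smul_snd, Prod.fst_sub, Prod.snd_sub, smul_eq_mul] at h ⊢ <;>
  field_simp
  · linear_combination -(B.2 - A.2) * h
  · linear_combination (B.1 - A.1) * h

lemma collinear_of_orient_eq_zero {A B C : ℝ × ℝ} (hAB : A ≠ B) (h : orient A B C = 0) :
    Collinear ℝ {C, A, B} := by
  obtain ⟨t, rfl⟩ := exists_eq_lineMap_of_orient_eq_zero hAB h
  exact collinear_insert_of_mem_affineSpan_pair (lineMap_mem_affineSpan_pair t A B)

lemma mul_convexComb_pos {a b s : ℝ} (hab : 0 < a * b) (hs : s ∈ Icc (0 : ℝ) 1) :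
    0 < a * ((1 - s) * a + s * b) := by
  obtain ⟨hs0, hs1⟩ := hs
  have ha : 0 < a * a := mul_self_pos.2 (left_ne_zero_of_mul hab.ne')
  nlinarith [mul_nonneg (sub_nonneg.2 hs1) (sub_nonneg.2 (min_le_left (a * a) (a * b))),
    mul_nonneg hs0 (sub_nonneg.2 (min_le_right (a * a) (a * b))), lt_min ha hab]

lemma pos_mul_or_pos_mul_of_convexComb {a b c t : ℝ} (hc : c ≠ 0) (ht : t ∈ Icc (0 : ℝ) 1)
    (h : c = (1 - t) * a + t * b) : 0 < c * a ∨ 0 < c * b := by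
  by_contra! hneg
  have hcc : c * c = (1 - t) * (c * a) + t * (c * b) := by linear_combination c * h
  nlinarith [mul_self_pos.2 hc, mul_nonneg (sub_nonneg.2 ht.2) (neg_nonneg.2 hneg.1),
    mul_nonneg ht.1 (neg_nonneg.2 hneg.2)]

lemma mul_pos_of_mul_eq_mul {a b s t : ℝ} (hs : 0 < s) (ht : 0 < t) (ha : a ≠ 0)
    (h : s * a = t * b) : 0 < a * b := by
  have h' : t * (a * b) = s * (a * a) := by linear_combination (-a) * h
  exact pos_of_mul_pos_right (h' ▸ mul_pos hs (mul_self_pos.2 ha)) ht.le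

lemma orient_eq_zero_of_mem_segment {A B Z : ℝ × ℝ} (h : Z ∈ segment ℝ A B) :
    orient A B Z = 0 := by
  rw [segment_eq_image_lineMap] at h
  obtain ⟨t, -, rfl⟩ := h
  simp [orient_lineMap_right]

lemma orient_mul_pos_of_mem_segment {A B X Y Z : ℝ × ℝ} (h : 0 < orient A B X * orient A B Y)
    (hZ : Z ∈ segment ℝ X Y) : 0 < orient A B X * orient A B Z := by
  rw [segment_eq_image_lineMap] at hZ
  obtain ⟨t, ht, rfl⟩ := hZ
  rw [orient_lineMap_right]
  exact mul_convexComb_pos h ht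

lemma orient_mul_nonneg_of_mem_segment {A B Q X Y : ℝ × ℝ} (hQ : orient A B Q = 0)
    (hX : X ∈ segment ℝ Q Y) : 0 ≤ orient A B X * orient A B Y := by
  rw [segment_eq_image_lineMap] at hX
  obtain ⟨t, ⟨ht, -⟩, rfl⟩ := hX
  rw [orient_lineMap_right, hQ, mul_zero, zero_add, mul_assoc]
  exact mul_nonneg ht (mul_self_nonneg _)

lemma orient_mul_neg_of_sbtw {A B P Q R : ℝ × ℝ} (hPQR : Sbtw ℝ P Q R)
    (hQ : orient A B Q = 0) (hP : orient A B P ≠ 0) : orient A B P * orient A B R < 0 := by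
  obtain ⟨⟨t, ⟨ht0, ht1⟩, rfl⟩, -⟩ := sbtw_iff_mem_image_Ioo_and_ne.1 hPQR
  rw [orient_lineMap_right] at hQ
  have h : t * (orient A B P * orient A B R) = -((1 - t) * (orient A B P * orient A B P)) := by
    linear_combination orient A B P * hQ
  nlinarith [mul_pos (sub_pos.2 ht1) (mul_self_pos.2 hP)]

lemma orient_mul_neg_of_sbtw_of_orient_ne_zero {P Q R Y : ℝ × ℝ} (hPQR : Sbtw ℝ P Q R)
    (hY : orient P R Y ≠ 0) : orient Q Y P * orient Q Y R < 0 := by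
  refine orient_mul_neg_of_sbtw hPQR (orient_self_ends Q Y) ?_
  obtain ⟨⟨t, ⟨ht0, -⟩, rfl⟩, -⟩ := sbtw_iff_mem_image_Ioo_and_ne.1 hPQR
  rw [orient_rotate P, orient_lineMap_mid, orient_self_left]
  simpa using ⟨ht0.ne', hY⟩

lemma eq_of_mem_segment_of_orient_eq_zero {A B W Z V : ℝ × ℝ} (hW : orient A B W = 0)
    (hZ : orient A B Z = 0) (hV : orient A B V ≠ 0) (h : Z ∈ segment ℝ W V) : Z = W := by
  rw [segment_eq_image_lineMap] at h
  obtain ⟨a, -, rfl⟩ := h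
  rw [orient_lineMap_right, hW, mul_zero, zero_add] at hZ
  rw [(mul_eq_zero.1 hZ).resolve_right hV, lineMap_apply_zero]

lemma eq_and_eq_of_mem_segment_of_mem_segment {A B X Y P R s : ℝ × ℝ}
    (hX : orient A B X = 0) (hY : orient A B Y = 0) (hPR : orient A B P * orient A B R < 0)
    (h₁ : s ∈ segment ℝ X P) (h₂ : s ∈ segment ℝ Y R) : s = X ∧ s = Y := by
  have hsP := orient_mul_nonneg_of_mem_segment hX h₁
  have hsR := orient_mul_nonneg_of_mem_segment hY h₂
  have hs : orient A B s = 0 := by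
    by_contra hs
    nlinarith [mul_nonneg hsP hsR, mul_self_pos.2 hs]
  exact ⟨eq_of_mem_segment_of_orient_eq_zero hX hs (left_ne_zero_of_mul hPR.ne) h₁,
    eq_of_mem_segment_of_orient_eq_zero hY hs (right_ne_zero_of_mul hPR.ne) h₂⟩

lemma exists_mem_segment_of_mem_convexHull_triple {E : Type*} [AddCommGroup E] [Module ℝ E]
    {p q r s : E} (h : p ∈ convexHull ℝ {q, r, s}) :
    ∃ y ∈ segment ℝ r s, p ∈ segment ℝ q y := by
  rw [convexHull_insert (insert_nonempty r {s}), mem_convexJoin, convexHull_pair] at h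
  obtain ⟨_, hq, y, hy, hp⟩ := h
  exact ⟨y, hy, mem_singleton_iff.1 hq ▸ hp⟩

def HasFourConvexIndep (S : Set (ℝ × ℝ)) : Prop :=
  ∃ a b c d : ℝ × ℝ, a ∈ S ∧ b ∈ S ∧ c ∈ S ∧ d ∈ S ∧
    ({a, b, c, d} : Set (ℝ × ℝ)).ncard = 4 ∧ ConvexIndep {a, b, c, d}

lemma notMem_convexHull_of_sameSide {A B C D : ℝ × ℝ}
    (h : 0 < orient A B C * orient A B D) : A ∉ convexHull ℝ {B, C, D} := by
  intro hA
  obtain ⟨y, hy, hAy⟩ := exists_mem_segment_of_mem_convexHull_triple hA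
  have hy0 := right_ne_zero_of_mul (orient_mul_pos_of_mem_segment h hy).ne'
  obtain rfl :=
    eq_of_mem_segment_of_orient_eq_zero (orient_self_right A B) (orient_self_ends A B) hy0 hAy
  simp at h

lemma hasFourConvexIndep_of_sameSide {S : Set (ℝ × ℝ)} {A B C D : ℝ × ℝ}
    (hA : A ∈ S) (hB : B ∈ S) (hC : C ∈ S) (hD : D ∈ S)
    (hAB : 0 < orient A B C * orient A B D) (hCD : 0 < orient C D A * orient C D B) :
    HasFourConvexIndep S := by
  have hBA : 0 < orient B A C * orient B A D := by
    rwa [orient_swap A B C, orient_swap A B D, neg_mul_neg]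
  have hDC : 0 < orient D C A * orient D C B := by
    rwa [orient_swap C D A, orient_swap C D B, neg_mul_neg]
  have nA := notMem_convexHull_of_sameSide hAB
  have nB := notMem_convexHull_of_sameSide hBA
  have nC := notMem_convexHull_of_sameSide hCD
  have nD := notMem_convexHull_of_sameSide hDC
  refine ⟨A, B, C, D, hA, hB, hC, hD,
    ncard_eq_four.2 ⟨A, B, C, D, ?_, ?_, ?_, ?_, ?_, ?_, rfl⟩, ?_⟩
  any_goals rintro rfl; simp at hAB hCD
  simp only [ConvexIndep, mem_insert_iff, mem_singleton_iff, forall_eq_or_imp, forall_eq]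
  refine ⟨fun h => nA (convexHull_mono ?_ h), fun h => nB (convexHull_mono ?_ h),
    fun h => nC (convexHull_mono ?_ h), fun h => nD (convexHull_mono ?_ h)⟩ <;>
  · intro x
    simp only [mem_sdiff, mem_insert_iff, mem_singleton_iff]
    tauto

lemma hasFourConvexIndep_of_diagonals {S : Set (ℝ × ℝ)} {P Q R X Y : ℝ × ℝ}
    (hP : P ∈ S) (hR : R ∈ S) (hX : X ∈ S) (hY : Y ∈ S)
    (hPQR : Sbtw ℝ P Q R) (hXQY : Sbtw ℝ X Q Y) (hXoff : orient P R X ≠ 0) :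
    HasFourConvexIndep S := by
  have hYoff := right_ne_zero_of_mul (orient_mul_neg_of_sbtw hXQY
    (orient_eq_zero_of_mem_segment hPQR.wbtw.mem_segment) hXoff).ne
  obtain ⟨⟨t, ⟨ht0, ht1⟩, rfl⟩, -⟩ := sbtw_iff_mem_image_Ioo_and_ne.1 hPQR
  obtain ⟨⟨u, ⟨hu0, hu1⟩, hQ⟩, -⟩ := sbtw_iff_mem_image_Ioo_and_ne.1 hXQY
  have hPX : t * orient P X R = u * orient P X Y := by
    simpa [hQ, orient_lineMap_right] using orient_lineMap_right P X X Y u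
  have hRY : (1 - t) * orient R Y P = (1 - u) * orient R Y X := by
    simpa [hQ, orient_lineMap_right] using orient_lineMap_right R Y X Y u
  refine hasFourConvexIndep_of_sameSide hP hX hR hY
    (mul_pos_of_mul_eq_mul ht0 hu0 ?_ hPX)
    (mul_pos_of_mul_eq_mul (sub_pos.2 ht1) (sub_pos.2 hu1) (by rwa [orient_rotate]) hRY)
  rwa [orient_swap_right, neg_ne_zero]

lemma hasFourConvexIndep_of_adjacent_sbtw {S : Set (ℝ × ℝ)} {P Q R s Y : ℝ × ℝ}
    (hP : P ∈ S) (hQ : Q ∈ S) (hs : s ∈ S) (hY : Y ∈ S)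
    (hPQR : Sbtw ℝ P Q R) (hRsY : Sbtw ℝ R s Y) (hYoff : orient P R Y ≠ 0) :
    HasFourConvexIndep S := by
  obtain ⟨⟨t, ⟨ht0, ht1⟩, rfl⟩, -⟩ := sbtw_iff_mem_image_Ioo_and_ne.1 hPQR
  obtain ⟨⟨b, ⟨hb0, hb1⟩, rfl⟩, -⟩ := sbtw_iff_mem_image_Ioo_and_ne.1 hRsY
  have hYRP : orient Y R P = -orient P R Y := by rw [orient_rotate, orient_swap_right]
  refine hasFourConvexIndep_of_sameSide hP hQ hY hs ?_ ?_
  · calc 0 < (t * t * b) * (orient P R Y * orient P R Y) :=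
          mul_pos (by positivity) (mul_self_pos.2 hYoff)
      _ = _ := by
        simp only [orient_lineMap_mid, orient_lineMap_right, orient_self_left, orient_self_right]
        ring
  · calc 0 < ((1 - b) * (1 - b) * (1 - t)) * (orient P R Y * orient P R Y) :=
          mul_pos (mul_pos (mul_pos (by linarith) (by linarith)) (by linarith))
            (mul_self_pos.2 hYoff)
      _ = _ := by
        simp only [orient_lineMap_mid, orient_lineMap_right, orient_self_left,
          orient_self_right, hYRP]
        ring

theorem radon_partition_four (a b c d : ℝ × ℝ) :
    (∃ z, z ∈ segment ℝ a b ∧ z ∈ segment ℝ c d) ∨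
    (∃ z, z ∈ segment ℝ a c ∧ z ∈ segment ℝ b d) ∨
    (∃ z, z ∈ segment ℝ a d ∧ z ∈ segment ℝ b c) ∨
    a ∈ convexHull ℝ {b, c, d} ∨ b ∈ convexHull ℝ {a, c, d} ∨
    c ∈ convexHull ℝ {a, b, d} ∨ d ∈ convexHull ℝ {a, b, c} := by
  have hdep : ¬ AffineIndependent ℝ ![a, b, c, d] := fun h => by
    have := h.card_le_finrank_succ
    have := Submodule.finrank_le (vectorSpan ℝ (range ![a, b, c, d]))
    simp only [Fintype.card_fin, Module.finrank_prod, Module.finrank_self] at *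
    omega
  obtain ⟨I, z, hzI, hzJ⟩ := Convex.radon_partition hdep
  lift I to Finset (Fin 4) using I.toFinite
  rw [← Finset.coe_compl] at hzJ
  have key : ∀ J : Finset (Fin 4),
      (J = ∅ ∧ Jᶜ = {0, 1, 2, 3}) ∨ (J = {0} ∧ Jᶜ = {1, 2, 3}) ∨ (J = {1} ∧ Jᶜ = {0, 2, 3}) ∨
      (J = {2} ∧ Jᶜ = {0, 1, 3}) ∨ (J = {3} ∧ Jᶜ = {0, 1, 2}) ∨ (J = {0, 1} ∧ Jᶜ = {2, 3}) ∨
      (J = {0, 2} ∧ Jᶜ = {1, 3}) ∨ (J = {0, 3} ∧ Jᶜ = {1, 2}) ∨ (J = {1, 2} ∧ Jᶜ = {0, 3}) ∨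
      (J = {1, 3} ∧ Jᶜ = {0, 2}) ∨ (J = {2, 3} ∧ Jᶜ = {0, 1}) ∨ (J = {0, 1, 2} ∧ Jᶜ = {3}) ∨
      (J = {0, 1, 3} ∧ Jᶜ = {2}) ∨ (J = {0, 2, 3} ∧ Jᶜ = {1}) ∨ (J = {1, 2, 3} ∧ Jᶜ = {0}) ∨
      (J = {0, 1, 2, 3} ∧ Jᶜ = ∅) := by decide
  rcases key I with h | h | h | h | h | h | h | h | h | h | h | h | h | h | h | h <;>
    rw [h.1] at hzI <;> rw [h.2] at hzJ <;>
    simp only [Nat.succ_eq_add_one, Nat.reduceAdd, Fin.isValue, Finset.coe_empty,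
      Finset.coe_singleton, Finset.coe_insert, image_empty, image_singleton, image_insert_eq,
      Matrix.cons_val_zero, Matrix.cons_val_one, Matrix.cons_val, convexHull_empty,
      convexHull_singleton, convexHull_pair, mem_empty_iff_false, mem_singleton_iff] at hzI hzJ <;>
    grind

def SegmentsMeet (S : Set (ℝ × ℝ)) (A B C D : ℝ × ℝ) : Prop :=
  ∃ s ∈ S, s ∈ segment ℝ A B ∧ s ∈ segment ℝ C D

def OnCevian (S : Set (ℝ × ℝ)) (A B C D : ℝ × ℝ) : Prop :=
  ∃ s ∈ S, s ∈ segment ℝ C D ∧ A ∈ segment ℝ B s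

def OnCevians (S : Set (ℝ × ℝ)) (A B C D : ℝ × ℝ) : Prop :=
  OnCevian S A B C D ∧ OnCevian S A C B D ∧ OnCevian S A D B C

/-- Every four points of `S` are in one of the configurations of `radon_partition_four`, with the
witnessing points in `S`. -/
def RadonClosed (S : Set (ℝ × ℝ)) : Prop :=
  ∀ A ∈ S, ∀ B ∈ S, ∀ C ∈ S, ∀ D ∈ S,
    SegmentsMeet S A B C D ∨ SegmentsMeet S A C B D ∨ SegmentsMeet S A D B C ∨
    OnCevians S A B C D ∨ OnCevians S B A C D ∨ OnCevians S C A B D ∨ OnCevians S D A B C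

lemma radonClosed_image {G : Set (ℝ × ℝ)} (hG : Convex ℝ G) {f : ℝ × ℝ → ℝ × ℝ}
    (hmono : ∀ p q x, p ∈ G → q ∈ G → x ∈ G → x ∈ segment ℝ p q →
      f x ∈ segment ℝ (f p) (f q)) :
    RadonClosed (f '' G) := by
  have meet {a b c d} (ha : a ∈ G) (hb : b ∈ G) (hc : c ∈ G) (hd : d ∈ G)
      (h : ∃ z, z ∈ segment ℝ a b ∧ z ∈ segment ℝ c d) :
      SegmentsMeet (f '' G) (f a) (f b) (f c) (f d) := by
    obtain ⟨z, hab, hcd⟩ := h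
    have hz := hG.segment_subset ha hb hab
    exact ⟨f z, mem_image_of_mem f hz, hmono a b z ha hb hz hab, hmono c d z hc hd hz hcd⟩
  have cevian {a b c d} (ha : a ∈ G) (hb : b ∈ G) (hc : c ∈ G) (hd : d ∈ G)
      (h : a ∈ convexHull ℝ {b, c, d}) : OnCevian (f '' G) (f a) (f b) (f c) (f d) := by
    obtain ⟨y, hy, hay⟩ := exists_mem_segment_of_mem_convexHull_triple h
    have hyG := hG.segment_subset hc hd hy
    exact ⟨f y, mem_image_of_mem f hyG, hmono c d y hc hd hyG hy, hmono b y a hb hyG ha hay⟩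
  have cevians {a b c d} (ha : a ∈ G) (hb : b ∈ G) (hc : c ∈ G) (hd : d ∈ G)
      (h : a ∈ convexHull ℝ {b, c, d}) : OnCevians (f '' G) (f a) (f b) (f c) (f d) :=
    ⟨cevian ha hb hc hd h, cevian ha hc hb hd (by rwa [insert_comm]),
      cevian ha hd hb hc (by rwa [insert_comm, pair_comm])⟩
  rintro _ ⟨a, ha, rfl⟩ _ ⟨b, hb, rfl⟩ _ ⟨c, hc, rfl⟩ _ ⟨d, hd, rfl⟩
  rcases radon_partition_four a b c d with h | h | h | h | h | h | h
  · exact .inl (meet ha hb hc hd h)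
  · exact .inr <| .inl <| meet ha hc hb hd h
  · exact .inr <| .inr <| .inl <| meet ha hd hb hc h
  · exact .inr <| .inr <| .inr <| .inl <| cevians ha hb hc hd h
  · exact .inr <| .inr <| .inr <| .inr <| .inl <| cevians hb ha hc hd h
  · exact .inr <| .inr <| .inr <| .inr <| .inr <| .inl <| cevians hc ha hb hd h
  · exact .inr <| .inr <| .inr <| .inr <| .inr <| .inr <| cevians hd ha hb hc h

lemma exists_mem_orient_ne_zero {S : Set (ℝ × ℝ)}
    (hline : ¬ ∃ p w q : ℝ × ℝ, w ≠ 0 ∧ S ⊆ lineThrough p w ∪ {q}) {P R : ℝ × ℝ}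
    (hPR : P ≠ R) (q : ℝ × ℝ) : ∃ Z ∈ S, orient P R Z ≠ 0 ∧ Z ≠ q := by
  by_contra! h
  refine hline ⟨P, R - P, q, sub_ne_zero.2 hPR.symm, fun Z hZ => ?_⟩
  by_cases hZ0 : orient P R Z = 0
  · obtain ⟨t, rfl⟩ := exists_eq_lineMap_of_orient_eq_zero hPR hZ0
    exact .inl ⟨t, by rw [lineMap_apply_module', add_comm]⟩
  · exact .inr (h Z hZ hZ0)

lemma RadonClosed.exists_sbtw {S : Set (ℝ × ℝ)} (hS : RadonClosed S)
    (hline : ¬ ∃ p w q : ℝ × ℝ, w ≠ 0 ∧ S ⊆ lineThrough p w ∪ {q}) :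
    ∃ P ∈ S, ∃ Q ∈ S, ∃ R ∈ S, Sbtw ℝ P Q R := by
  have h01 : (0 : ℝ × ℝ) ≠ (1, 0) := by simp [Prod.ext_iff]
  obtain ⟨A, hA, -, -⟩ := exists_mem_orient_ne_zero hline h01 0
  obtain ⟨B, hB, -, hBA⟩ := exists_mem_orient_ne_zero hline h01 A
  obtain ⟨C, hC, hCAB, -⟩ := exists_mem_orient_ne_zero hline hBA.symm 0
  obtain ⟨D, hD, hDAB, hDC⟩ := exists_mem_orient_ne_zero hline hBA.symm C
  have hAC : A ≠ C := by rintro rfl; simp at hCAB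
  have hAD : A ≠ D := by rintro rfl; simp at hDAB
  have hBC : B ≠ C := by rintro rfl; simp at hCAB
  have hBD : B ≠ D := by rintro rfl; simp at hDAB
  clear hCAB hDAB
  by_contra! hno
  have endpoint {P Q R} (hP : P ∈ S) (hQ : Q ∈ S) (hR : R ∈ S) (h : Q ∈ segment ℝ P R) :
      Q = P ∨ Q = R := by
    by_contra! hne
    exact hno P hP Q hQ R hR ⟨mem_segment_iff_wbtw.1 h, hne⟩
  rcases hS A hA B hB C hC D hD with ⟨s, hs, h₁, h₂⟩ | ⟨s, hs, h₁, h₂⟩ | ⟨s, hs, h₁, h₂⟩ |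
    ⟨⟨s, hs, h₁, h₂⟩, -⟩ | ⟨⟨s, hs, h₁, h₂⟩, -⟩ | ⟨⟨s, hs, h₁, h₂⟩, -⟩ | ⟨⟨s, hs, h₁, h₂⟩, -⟩ <;>
  rcases endpoint (by assumption) (by assumption) (by assumption) h₁ with rfl | rfl <;>
  rcases endpoint (by assumption) (by assumption) (by assumption) h₂ with h | h <;>
  first | exact absurd h ‹_› | exact absurd h.symm ‹_›

lemma RadonClosed.exists_mem_segment_of_oppSide {S : Set (ℝ × ℝ)} (hS : RadonClosed S)
    {P R X Y : ℝ × ℝ} (hP : P ∈ S) (hR : R ∈ S) (hX : X ∈ S) (hY : Y ∈ S) (hPR : P ≠ R)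
    (hXY : orient P R X * orient P R Y < 0) :
    ∃ U ∈ S, U ∈ segment ℝ X Y ∧ orient P R U = 0 := by
  have hP0 : orient P R P = 0 := orient_self_ends P R
  have hR0 : orient P R R = 0 := orient_self_right P R
  rcases hS X hX Y hY P hP R hR with ⟨s, hs, hsXY, hsPR⟩ | ⟨s, hs, hsXP, hsYR⟩ |
    ⟨s, hs, hsXR, hsYP⟩ | ⟨⟨s, hs, hsPR, hXYs⟩, -⟩ | ⟨⟨s, hs, hsPR, hYXs⟩, -⟩ |
    ⟨-, -, s, hs, hsXY, hPRs⟩ | ⟨-, -, s, hs, hsXY, hRPs⟩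
  · exact ⟨s, hs, hsXY, orient_eq_zero_of_mem_segment hsPR⟩
  · rw [segment_symm] at hsXP hsYR
    obtain ⟨rfl, rfl⟩ := eq_and_eq_of_mem_segment_of_mem_segment hP0 hR0 hXY hsXP hsYR
    exact absurd rfl hPR
  · rw [segment_symm] at hsXR hsYP
    obtain ⟨rfl, rfl⟩ := eq_and_eq_of_mem_segment_of_mem_segment hR0 hP0 hXY hsXR hsYP
    exact absurd rfl hPR
  · rw [segment_symm] at hXYs
    linarith [orient_mul_nonneg_of_mem_segment (orient_eq_zero_of_mem_segment hsPR) hXYs]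
  · rw [segment_symm] at hYXs
    linarith [orient_mul_nonneg_of_mem_segment (orient_eq_zero_of_mem_segment hsPR) hYXs]
  · exact ⟨s, hs, hsXY, by_contra fun hs0 =>
      hPR (eq_of_mem_segment_of_orient_eq_zero hR0 hP0 hs0 hPRs)⟩
  · exact ⟨s, hs, hsXY, by_contra fun hs0 =>
      hPR (eq_of_mem_segment_of_orient_eq_zero hP0 hR0 hs0 hRPs).symm⟩

lemma RadonClosed.hasFourConvexIndep_of_sbtw_of_sbtw {S : Set (ℝ × ℝ)} (hS : RadonClosed S)
    {P Q R X Y : ℝ × ℝ} (hP : P ∈ S) (hQ : Q ∈ S) (hR : R ∈ S) (hX : X ∈ S) (hY : Y ∈ S)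
    (hPQR : Sbtw ℝ P Q R) (hQXY : Sbtw ℝ Q X Y) (hYoff : orient P R Y ≠ 0) :
    HasFourConvexIndep S := by
  have hPR := hPQR.left_ne_right
  have hXY := hQXY.ne_right
  obtain ⟨⟨u, ⟨hu0, hu1⟩, hXu⟩, -⟩ := sbtw_iff_mem_image_Ioo_and_ne.1 hQXY
  have hσX : orient P R X = u * orient P R Y := by
    rw [← hXu, orient_lineMap_right, orient_eq_zero_of_mem_segment hPQR.wbtw.mem_segment]; ring
  have hσXY : 0 < orient P R X * orient P R Y := by
    rw [hσX, mul_assoc]; exact mul_pos hu0 (mul_self_pos.2 hYoff)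
  have hσ {s} (hs : s ∈ segment ℝ X Y) : orient P R s ≠ 0 :=
    right_ne_zero_of_mul (orient_mul_pos_of_mem_segment hσXY hs).ne'
  have hτX : orient Q Y X = 0 := orient_eq_zero_of_mem_segment hQXY.wbtw.mem_segment
  have hτY : orient Q Y Y = 0 := orient_self_right Q Y
  have hτPR := orient_mul_neg_of_sbtw_of_orient_ne_zero hPQR hYoff
  rcases hS P hP R hR X hX Y hY with ⟨s, hs, hsPR, hsXY⟩ | ⟨s, hs, hsPX, hsRY⟩ |
    ⟨s, hs, hsPY, hsRX⟩ | ⟨⟨s, hs, hsXY, hPRs⟩, -⟩ | ⟨⟨s, hs, hsXY, hRPs⟩, -⟩ |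
    ⟨⟨s, hs, hsRY, hXPs⟩, -⟩ | ⟨-, -, s, hs, hsPR, hYXs⟩
  · exact absurd (orient_eq_zero_of_mem_segment hsPR) (hσ hsXY)
  · rw [segment_symm] at hsPX hsRY
    obtain ⟨rfl, rfl⟩ := eq_and_eq_of_mem_segment_of_mem_segment hτX hτY hτPR hsPX hsRY
    exact absurd rfl hXY
  · rw [segment_symm] at hsPY hsRX
    obtain ⟨rfl, rfl⟩ := eq_and_eq_of_mem_segment_of_mem_segment hτY hτX hτPR hsPY hsRX
    exact absurd rfl hXY
  · exact absurd (eq_of_mem_segment_of_orient_eq_zero (orient_self_right P R)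
      (orient_self_ends P R) (hσ hsXY) hPRs) hPR
  · exact absurd (eq_of_mem_segment_of_orient_eq_zero (orient_self_ends P R)
      (orient_self_right P R) (hσ hsXY) hRPs).symm hPR
  · refine hasFourConvexIndep_of_adjacent_sbtw hP hQ hs hY hPQR
      ⟨mem_segment_iff_wbtw.1 hsRY, ?_, ?_⟩ hYoff
    · rintro rfl
      exact left_ne_zero_of_mul hσXY.ne' (orient_eq_zero_of_mem_segment hXPs)
    · rintro rfl
      rw [segment_symm] at hXPs
      exact hXY (eq_of_mem_segment_of_orient_eq_zero hτY hτX (left_ne_zero_of_mul hτPR.ne) hXPs)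
  · rw [segment_eq_image_lineMap] at hYXs
    obtain ⟨a, ⟨ha0, ha1⟩, hYa⟩ := hYXs
    have h := orient_lineMap_right P R X s a
    rw [hYa, hσX, orient_eq_zero_of_mem_segment hsPR] at h
    have h0 : orient P R Y * (1 - (1 - a) * u) = 0 := by linear_combination h
    exact absurd ((mul_eq_zero.1 h0).resolve_right (by nlinarith)) hYoff

lemma RadonClosed.hasFourConvexIndep_of_sbtw_of_sameSide {S : Set (ℝ × ℝ)}
    (hS : RadonClosed S) {P Q R X Y : ℝ × ℝ} (hP : P ∈ S) (hQ : Q ∈ S) (hR : R ∈ S)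
    (hX : X ∈ S) (hY : Y ∈ S) (hPQR : Sbtw ℝ P Q R) (hXY : X ≠ Y)
    (hside : 0 < orient P R X * orient P R Y) :
    HasFourConvexIndep S := by
  have hσQ : orient P R Q = 0 := orient_eq_zero_of_mem_segment hPQR.wbtw.mem_segment
  have hX0 := left_ne_zero_of_mul hside.ne'
  have hY0 := right_ne_zero_of_mul hside.ne'
  obtain ⟨⟨t, ⟨ht0, ht1⟩, hQt⟩, -⟩ := sbtw_iff_mem_image_Ioo_and_ne.1 hPQR
  by_cases hαQ : orient X Y Q = 0
  · rcases (collinear_of_orient_eq_zero hXY hαQ).wbtw_or_wbtw_or_wbtw with h | h | h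
    · refine hS.hasFourConvexIndep_of_sbtw_of_sbtw hP hQ hR hX hY hPQR ⟨h, ?_, hXY⟩ hY0
      rintro rfl; exact hX0 hσQ
    · refine hS.hasFourConvexIndep_of_sbtw_of_sbtw hP hQ hR hY hX hPQR
        ⟨h.symm, ?_, hXY.symm⟩ hX0
      rintro rfl; exact hY0 hσQ
    · have := orient_mul_pos_of_mem_segment (mul_comm (orient P R X) _ ▸ hside) h.mem_segment
      rw [hσQ, mul_zero] at this
      exact absurd this (lt_irrefl 0)
  · have hαQ' : orient X Y Q = (1 - t) * orient X Y P + t * orient X Y R := by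
      rw [← hQt, orient_lineMap_right]
    rcases pos_mul_or_pos_mul_of_convexComb hαQ ⟨ht0.le, ht1.le⟩ hαQ' with hQP | hQR
    · refine hasFourConvexIndep_of_sameSide hP hQ hX hY ?_ (by rwa [mul_comm])
      have hPQ (Z) : orient P Q Z = t * orient P R Z := by
        rw [← hQt, orient_lineMap_mid, orient_self_left]; ring
      rw [hPQ, hPQ]
      nlinarith [mul_pos (mul_pos ht0 ht0) hside]
    · refine hasFourConvexIndep_of_sameSide hQ hR hX hY ?_ hQR
      have hQR' (Z) : orient Q R Z = (1 - t) * orient P R Z := by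
        rw [← hQt, orient_lineMap_left, orient_self_left]; ring
      rw [hQR', hQR']
      nlinarith [mul_pos (mul_pos (sub_pos.2 ht1) (sub_pos.2 ht1)) hside]

lemma RadonClosed.hasFourConvexIndep_of_sbtw_of_oppSide {S : Set (ℝ × ℝ)}
    (hS : RadonClosed S) {P Q R X Y : ℝ × ℝ} (hP : P ∈ S) (hQ : Q ∈ S) (hR : R ∈ S)
    (hX : X ∈ S) (hY : Y ∈ S) (hPQR : Sbtw ℝ P Q R)
    (hside : orient P R X * orient P R Y < 0) :
    HasFourConvexIndep S := by
  have hσQ : orient P R Q = 0 := orient_eq_zero_of_mem_segment hPQR.wbtw.mem_segment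
  have hX0 := left_ne_zero_of_mul hside.ne
  have hY0 := right_ne_zero_of_mul hside.ne
  have hXY : X ≠ Y := by rintro rfl; nlinarith [mul_self_nonneg (orient P R X)]
  by_cases hαQ : orient X Y Q = 0
  · rcases (collinear_of_orient_eq_zero hXY hαQ).wbtw_or_wbtw_or_wbtw with h | h | h
    · linarith [orient_mul_nonneg_of_mem_segment hσQ h.mem_segment]
    · linarith [orient_mul_nonneg_of_mem_segment hσQ h.symm.mem_segment]
    · refine hasFourConvexIndep_of_diagonals hP hR hX hY hPQR ⟨h.symm, ?_, ?_⟩ hX0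
      · rintro rfl; exact hX0 hσQ
      · rintro rfl; exact hY0 hσQ
  · obtain ⟨U, hU, hUXY, hσU⟩ :=
      hS.exists_mem_segment_of_oppSide hP hR hX hY hPQR.left_ne_right hside
    have hXUY : Sbtw ℝ X U Y :=
      ⟨mem_segment_iff_wbtw.1 hUXY, fun h => hX0 (h ▸ hσU), fun h => hY0 (h ▸ hσU)⟩
    obtain ⟨⟨t, ⟨ht0, ht1⟩, hQt⟩, -⟩ := sbtw_iff_mem_image_Ioo_and_ne.1 hPQR
    have hαQ' : orient X Y Q = (1 - t) * orient X Y P + t * orient X Y R := by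
      rw [← hQt, orient_lineMap_right]
    rcases pos_mul_or_pos_mul_of_convexComb hαQ ⟨ht0.le, ht1.le⟩ hαQ' with hQP | hQR
    · exact hS.hasFourConvexIndep_of_sbtw_of_sameSide hX hU hY hQ hP hXUY hPQR.ne_left hQP
    · exact hS.hasFourConvexIndep_of_sbtw_of_sameSide hX hU hY hQ hR hXUY hPQR.ne_right hQR

lemma RadonClosed.hasFourConvexIndep_of_sbtw {S : Set (ℝ × ℝ)} (hS : RadonClosed S)
    (hline : ¬ ∃ p w q : ℝ × ℝ, w ≠ 0 ∧ S ⊆ lineThrough p w ∪ {q})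
    {P Q R : ℝ × ℝ} (hP : P ∈ S) (hQ : Q ∈ S) (hR : R ∈ S) (hPQR : Sbtw ℝ P Q R) :
    HasFourConvexIndep S := by
  obtain ⟨X, hX, hX0, -⟩ := exists_mem_orient_ne_zero hline hPQR.left_ne_right 0
  obtain ⟨Y, hY, hY0, hYX⟩ := exists_mem_orient_ne_zero hline hPQR.left_ne_right X
  rcases (mul_ne_zero hX0 hY0).lt_or_gt with hopp | hsame
  · exact hS.hasFourConvexIndep_of_sbtw_of_oppSide hP hQ hR hX hY hPQR hopp
  · exact hS.hasFourConvexIndep_of_sbtw_of_sameSide hP hQ hR hX hY hPQR hYX.symm hsame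

end MonotoneImage

theorem stmt_11_general (G : Set (ℝ × ℝ)) (hG : Convex ℝ G) (f : ℝ × ℝ → ℝ × ℝ)
    (hmono : ∀ p q x, p ∈ G → q ∈ G → x ∈ G → x ∈ segment ℝ p q →
      f x ∈ segment ℝ (f p) (f q))
    (hnotline : ¬ ∃ (p w q : ℝ × ℝ), w ≠ 0 ∧ f '' G ⊆ lineThrough p w ∪ {q}) :
    ∃ a b c d : ℝ × ℝ, a ∈ f '' G ∧ b ∈ f '' G ∧ c ∈ f '' G ∧ d ∈ f '' G ∧
      ({a, b, c, d} : Set (ℝ × ℝ)).ncard = 4 ∧ ConvexIndep {a, b, c, d} := by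
  have hS := MonotoneImage.radonClosed_image hG hmono
  obtain ⟨P, hP, Q, hQ, R, hR, hPQR⟩ := hS.exists_sbtw hnotline
  exact hS.hasFourConvexIndep_of_sbtw hnotline hP hQ hR hPQR

/-- If the image of a monotone map on a convex planar set is not contained
in a line plus one point and has empty interior, then it contains four convex
independent points. -/
theorem stmt_11 (G : Set (ℝ × ℝ)) (hG : Convex ℝ G) (f : ℝ × ℝ → ℝ × ℝ)
    (hmono : ∀ p q x, p ∈ G → q ∈ G → x ∈ G → x ∈ segment ℝ p q →
      f x ∈ segment ℝ (f p) (f q))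
    (hnotline : ¬ ∃ (p w q : ℝ × ℝ), w ≠ 0 ∧ f '' G ⊆ lineThrough p w ∪ {q})
    (hint : interior (f '' G) = ∅) :
    ∃ a b c d : ℝ × ℝ, a ∈ f '' G ∧ b ∈ f '' G ∧ c ∈ f '' G ∧ d ∈ f '' G ∧
      ({a, b, c, d} : Set (ℝ × ℝ)).ncard = 4 ∧ ConvexIndep {a, b, c, d} :=
  stmt_11_general G hG f hmono hnotline
end

section
/- Let S be a subset of a real vector space V with |S| strictly less than the continuum, and let L be a one-dimensional linear subspace of V. Then there exists a linear projection P : V → L such that P restricted to S is injective. In particular, S admits an injective monotone map into ℝ. -/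
/-!
Fix a basis of the span of `S - S` and of a generator `v` of `L`. These fewer than `𝔠` vectors
have fewer than `𝔠` nonzero coordinates, which generate a subfield `K ⊆ ℝ` of size `< 𝔠`. Over
`K`, `ℝ` has dimension `𝔠`, so the basis vectors can be sent to `K`-linearly independent reals.
The resulting functional `f` cannot vanish on a nonzero vector with coordinates in `K`, so it is
injective on `S` and `f v ≠ 0`; then `x ↦ (f x / f v) • v` is the projection, and `f` itself is
monotone on segments because it is linear.
-/

open Cardinal Pointwise

universe u v w

theorem LinearIndependent.eq_zero_of_linearCombination_eq_zero_of_forall_mem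
    {R : Type*} [CommRing R] {K : Subring R} {ι : Type*} {c : ι → R}
    (hc : LinearIndependent K c) {x : ι →₀ R} (hx : ∀ i, x i ∈ K)
    (h : Finsupp.linearCombination R c x = 0) : x = 0 := by
  classical
  have hsum : ∑ i ∈ x.support, (⟨x i, hx i⟩ : K) • c i = 0 := by
    simpa [Finsupp.linearCombination_apply, Finsupp.sum, Subring.smul_def] using h
  ext i
  by_contra hi
  exact hi (congrArg Subtype.val
    (linearIndependent_iff'.mp hc _ _ hsum i (Finsupp.mem_support_iff.mpr hi)))

theorem Subfield.exists_linearIndependent_of_mk_lt {F : Type v} [Field F] (K : Subfield F)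
    [Infinite K] (hK : #K < #F) (ι : Type u) (hι : lift.{v} #ι ≤ lift.{u} #F) :
    ∃ c : ι → F, LinearIndependent K c := by
  let B := Module.Free.chooseBasis K F
  have hrank : #(Module.Free.ChooseBasisIndex K F) = #F := by
    rw [← Module.Free.rank_eq_card_chooseBasisIndex,
      Module.Free.rank_eq_mk_of_infinite_lt K F (by simpa using hK)]
  obtain ⟨e⟩ := lift_mk_le'.mp (hrank ▸ hι)
  exact ⟨B ∘ e, B.linearIndependent.comp e e.injective⟩

theorem Cardinal.mk_biUnion_lt_continuum_of_finite {α : Type u} {β : Type v} {s : Set α}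
    (hs : #s < 𝔠) {t : α → Set β} (ht : ∀ a ∈ s, (t a).Finite) : #(⋃ a ∈ s, t a) < 𝔠 := by
  rw [← lift_lt_continuum.{v, u}]
  refine (mk_biUnion_le_lift t s).trans_lt <| mul_lt_of_lt aleph0_le_continuum
    (lift_lt_continuum.mpr hs) ((ciSup_le' fun a => ?_).trans_lt aleph0_lt_continuum)
  simpa using (ht a a.2).lt_aleph0.le

theorem Module.Basis.exists_linearMap_ne_zero_of_mk_lt_continuum {V : Type u} [AddCommGroup V]
    [Module ℝ V] {ι : Type w} (B : Module.Basis ι ℝ V) (hι : #ι < 𝔠) {D : Set V}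
    (hD : #D < 𝔠) :
    ∃ f : V →ₗ[ℝ] ℝ, ∀ d ∈ D, d ≠ 0 → f d ≠ 0 := by
  let K := Subfield.closure (⋃ d ∈ D, Set.range (B.repr d))
  have hK : #K < 𝔠 := (Subfield.cardinalMk_closure_le_max _).trans_lt <| max_lt
    (mk_biUnion_lt_continuum_of_finite hD fun d _ => (B.repr d).finite_range)
    aleph0_lt_continuum
  have : Infinite K := Infinite.of_injective _ (Nat.cast_injective (R := K))
  obtain ⟨c, hc⟩ := K.exists_linearIndependent_of_mk_lt (by rwa [mk_real]) ι
    (by simpa [mk_real] using hι.le)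
  refine ⟨Finsupp.linearCombination ℝ c ∘ₗ B.repr, fun d hd hd0 hfd => hd0 ?_⟩
  have hcoord : ∀ i, B.repr d i ∈ K := fun i =>
    Subfield.subset_closure (Set.mem_biUnion hd ⟨i, rfl⟩)
  exact B.repr.map_eq_zero_iff.mp
    (hc.eq_zero_of_linearCombination_eq_zero_of_forall_mem (K := K.toSubring) hcoord hfd)

theorem exists_linearMap_ne_zero_of_mk_lt_continuum {V : Type u} [AddCommGroup V]
    [Module ℝ V] {D : Set V} (hD : #D < 𝔠) : ∃ f : V →ₗ[ℝ] ℝ, ∀ d ∈ D, d ≠ 0 → f d ≠ 0 := by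
  let W := Submodule.span ℝ D
  have hι : #(Module.Free.ChooseBasisIndex ℝ W) < 𝔠 := by
    rw [← Module.Free.rank_eq_card_chooseBasisIndex]
    exact (rank_span_le D).trans_lt hD
  obtain ⟨f, hf⟩ :=
    (Module.Free.chooseBasis ℝ W).exists_linearMap_ne_zero_of_mk_lt_continuum hι
      (D := (↑) ⁻¹' D) ((mk_preimage_of_injective _ _ Subtype.val_injective).trans_lt hD)
  obtain ⟨g, rfl⟩ := LinearMap.exists_extend f
  exact ⟨g, fun d hd hd0 => hf ⟨d, Submodule.subset_span hd⟩ hd (by simpa using hd0)⟩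

theorem exists_linearMap_injOn_of_mk_lt_continuum {V : Type u} [AddCommGroup V] [Module ℝ V]
    {S : Set V} (hS : #S < 𝔠) {v : V} (hv : v ≠ 0) :
    ∃ f : V →ₗ[ℝ] ℝ, f v = 1 ∧ Set.InjOn f S := by
  have hD : #(insert v (S - S) : Set V) < 𝔠 :=
    mk_insert_le.trans_lt <| add_lt_of_lt aleph0_le_continuum
      (mk_sub_le.trans_lt (mul_lt_of_lt aleph0_le_continuum hS hS))
      (one_lt_aleph0.trans aleph0_lt_continuum)
  obtain ⟨f, hf⟩ := exists_linearMap_ne_zero_of_mk_lt_continuum hD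
  have hfv : f v ≠ 0 := hf v (Set.mem_insert v _) hv
  refine ⟨(f v)⁻¹ • f, inv_mul_cancel₀ hfv, fun a ha b hb hab => ?_⟩
  by_contra hne
  refine hf (a - b) (Set.mem_insert_of_mem _ (Set.sub_mem_sub ha hb)) (sub_ne_zero.mpr hne) ?_
  simpa [hfv, sub_eq_zero] using hab

theorem LinearMap.smulRight_comp_smulRight_self {R M : Type*} [CommSemiring R]
    [AddCommMonoid M] [Module R M] {f : M →ₗ[R] R} {v : M} (hv : f v = 1) :
    f.smulRight v ∘ₗ f.smulRight v = f.smulRight v := by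
  ext x
  simp [hv]

theorem LinearMap.mem_uIcc_of_mem_segment {𝕜 E : Type*} [Field 𝕜] [LinearOrder 𝕜]
    [IsStrictOrderedRing 𝕜] [AddCommGroup E] [Module 𝕜 E] (f : E →ₗ[𝕜] 𝕜) {a b x : E}
    (hx : x ∈ segment 𝕜 a b) : f x ∈ Set.uIcc (f a) (f b) := by
  rw [← segment_eq_uIcc]
  have h := Set.mem_image_of_mem f.toAffineMap hx
  rwa [image_segment] at h

/-- A subset of cardinality < continuum of a real vector space can be
linearly projected onto a given one-dimensional subspace injectively; in particular it
admits an injective monotone map into ℝ. -/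
theorem stmt_12 (V : Type*) [AddCommGroup V] [Module ℝ V]
    (S : Set V) (hS : Cardinal.mk S < Cardinal.continuum)
    (L : Submodule ℝ V) (hL : Module.finrank ℝ L = 1) :
    (∃ P : V →ₗ[ℝ] V, (P ∘ₗ P = P) ∧ LinearMap.range P = L ∧ Set.InjOn P S) ∧
    (∃ g : V → ℝ, Set.InjOn g S ∧
      ∀ a b x : V, a ∈ S → b ∈ S → x ∈ S → x ∈ segment ℝ a b →
        g x ∈ Set.uIcc (g a) (g b)) := by
  obtain ⟨⟨v, hvL⟩, hv0, -⟩ := finrank_eq_one_iff'.mp hL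
  have hv : v ≠ 0 := fun h => hv0 (Subtype.ext h)
  obtain ⟨f, hfv, hf⟩ := exists_linearMap_injOn_of_mk_lt_continuum hS hv
  refine ⟨⟨f.smulRight v, LinearMap.smulRight_comp_smulRight_self hfv, ?_, ?_⟩,
    ⟨f, hf, fun a b x _ _ _ hx => f.mem_uIcc_of_mem_segment hx⟩⟩
  · rw [LinearMap.range_smulRight_apply_of_surjective,
      eq_span_singleton_of_mem_of_finrank_eq_one hL hvL hv]
    exact fun r => ⟨r • v, by simp [hfv]⟩
  · exact (smul_left_injective ℝ hv).comp_injOn hf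
end

section
/- There is no injective monotone map from an open nonempty subset of ℝ² into ℝ, where ℝ² carries euclidean betweenness and ℝ carries order betweenness. -/
/-!
At a point `x` of a convex open set, the sublevel and superlevel sets of `f` at `f x` are convex
and, by injectivity, meet only in `x`; Hahn–Banach gives a functional `ℓₓ ≠ 0` with `f < f x`
strictly below the level line `ℓₓ = ℓₓ x` and `f > f x` strictly above it. Two such level lines
cannot cross inside the set, and a point `b` on the level line of `x` has the same, equally
oriented, level line. Along a segment through `p` transversal to the level line of `p`, the level
lines are therefore pairwise distinct, and choosing `bₓ` on the line of `x` with `f x < f bₓ`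
makes the intervals `(f x, f bₓ)` pairwise disjoint: uncountably many disjoint open intervals
in `ℝ`.
-/

open Set Topology Module

variable {E : Type*} [NormedAddCommGroup E] [NormedSpace ℝ E] {S : Set E} {f : E → ℝ}

def SegmentMonotoneOn (f : E → ℝ) (S : Set E) : Prop :=
  ∀ a b x, a ∈ S → b ∈ S → x ∈ S → x ∈ segment ℝ a b → f x ∈ uIcc (f a) (f b)

def SeparatesAt (f : E → ℝ) (S : Set E) (ℓ : StrongDual ℝ E) (x : E) : Prop :=
  ∀ z ∈ S, (ℓ z < ℓ x → f z < f x) ∧ (ℓ x < ℓ z → f x < f z)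

theorem IsOpen.exists_pos_add_smul_mem_and_sub_smul_mem (hS : IsOpen S) {w : E} (hw : w ∈ S)
    (d : E) : ∃ c > (0 : ℝ), w + c • d ∈ S ∧ w - c • d ∈ S := by
  have hnhds : ∀ v : E, ∀ᶠ c in 𝓝 (0 : ℝ), w + c • v ∈ S := fun v =>
    (Continuous.tendsto' (by fun_prop) 0 w (by simp)) (hS.mem_nhds hw)
  have hboth : ∀ᶠ c in 𝓝[>] (0 : ℝ), w + c • d ∈ S ∧ w + c • (-d) ∈ S :=
    ((hnhds d).and (hnhds (-d))).filter_mono nhdsWithin_le_nhds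
  obtain ⟨c, ⟨hp, hm⟩, hc⟩ := (hboth.and self_mem_nhdsWithin).exists
  exact ⟨c, hc, hp, by simpa [sub_eq_add_neg] using hm⟩

theorem exists_pos_smul_eq_of_forall_neg_imp_nonpos {ℓ ℓ' : StrongDual ℝ E} (hℓ : ℓ ≠ 0)
    (hℓ' : ℓ' ≠ 0) (h : ∀ d, ℓ d < 0 → ℓ' d ≤ 0) : ∃ t > (0 : ℝ), ℓ' = t • ℓ := by
  obtain ⟨v, hv⟩ : ∃ v, ℓ v ≠ 0 := by simpa [DFunLike.ne_iff] using hℓ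
  set u := (-(ℓ v)⁻¹) • v
  have hu : ℓ u = -1 := by simp [u, inv_mul_cancel₀ hv]
  have hker : ∀ d, ℓ d = 0 → ℓ' d = 0 := fun d hd => by
    by_contra hd'
    have := h (u + ((1 - ℓ' u) / ℓ' d) • d) (by simp [hu, hd])
    simp only [map_add, map_smul, smul_eq_mul, div_mul_cancel₀ _ hd'] at this
    linarith
  have hprop : ∀ z, ℓ' z = -ℓ' u * ℓ z := fun z => by
    have := hker (z + ℓ z • u) (by simp [hu])
    simp only [map_add, map_smul, smul_eq_mul] at this
    linarith
  have ht : -ℓ' u ≠ 0 := fun ht => hℓ' (ContinuousLinearMap.ext fun z => by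
    rw [hprop, ht, zero_mul, zero_apply])
  exact ⟨-ℓ' u, (neg_nonneg.mpr (h u (by simp [hu]))).lt_of_ne' ht,
    ContinuousLinearMap.ext fun z => by rw [hprop, smul_apply, smul_eq_mul]⟩

theorem SeparatesAt.exists_pos_smul_eq {ℓ ℓ' : StrongDual ℝ E} {x y w : E}
    (hx : SeparatesAt f S ℓ x) (hy : SeparatesAt f S ℓ' y) (hℓ : ℓ ≠ 0) (hℓ' : ℓ' ≠ 0)
    (hS : IsOpen S) (hw : w ∈ S) (hwx : ℓ w = ℓ x) (hwy : ℓ' w = ℓ' y) :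
    ∃ t > (0 : ℝ), ℓ' = t • ℓ := by
  refine exists_pos_smul_eq_of_forall_neg_imp_nonpos hℓ hℓ' fun d hd => ?_
  by_contra! hd'
  -- Moving from `w` along `d` gives `f y < f x`, moving along `-d` gives `f x < f y`.
  obtain ⟨c, hc, hp, hm⟩ := hS.exists_pos_add_smul_mem_and_sub_smul_mem hw d
  have hcd : c * ℓ d < 0 := mul_neg_of_pos_of_neg hc hd
  have hcd' : 0 < c * ℓ' d := mul_pos hc hd'
  have h1 := (hx _ hp).1 (by simp only [map_add, map_smul, smul_eq_mul, hwx]; linarith)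
  have h2 := (hy _ hp).2 (by simp only [map_add, map_smul, smul_eq_mul, hwy]; linarith)
  have h3 := (hx _ hm).2 (by simp only [map_sub, map_smul, smul_eq_mul, hwx]; linarith)
  have h4 := (hy _ hm).1 (by simp only [map_sub, map_smul, smul_eq_mul, hwy]; linarith)
  linarith

namespace SegmentMonotoneOn

theorem mono {T : Set E} (hf : SegmentMonotoneOn f S) (hT : T ⊆ S) : SegmentMonotoneOn f T :=
  fun a b x ha hb hx => hf a b x (hT ha) (hT hb) (hT hx)

theorem mem_uIcc_sub_add (hf : SegmentMonotoneOn f S) {x v : E} (hm : x - v ∈ S) (hx : x ∈ S)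
    (hp : x + v ∈ S) : f x ∈ uIcc (f (x - v)) (f (x + v)) :=
  hf _ _ _ hm hp hx (mem_segment_sub_add x v)

theorem quasilinearOn (hf : SegmentMonotoneOn f S) (hS : Convex ℝ S) :
    QuasilinearOn ℝ S f := by
  have hmem : ∀ ⦃a⦄, a ∈ S → ∀ ⦃b⦄, b ∈ S → ∀ ⦃s t : ℝ⦄, 0 ≤ s → 0 ≤ t → s + t = 1 →
      f (s • a + t • b) ∈ uIcc (f a) (f b) := fun a ha b hb s t hs ht hst =>
    hf a b _ ha hb (hS ha hb hs ht hst) ⟨s, t, hs, ht, hst, rfl⟩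
  exact ⟨quasiconvexOn_iff_le_max.mpr ⟨hS, fun a ha b hb s t hs ht hst =>
      (hmem ha hb hs ht hst).2⟩,
    quasiconcaveOn_iff_min_le.mpr ⟨hS, fun a ha b hb s t hs ht hst =>
      (hmem ha hb hs ht hst).1⟩⟩

theorem affineSpan_sublevel_eq_top (hf : SegmentMonotoneOn f S) (hS : IsOpen S) {x : E}
    (hx : x ∈ S) : affineSpan ℝ {z ∈ S | f z ≤ f x} = ⊤ := by
  set A := {z ∈ S | f z ≤ f x}
  have hxA : x ∈ affineSpan ℝ A := subset_affineSpan ℝ A ⟨hx, le_rfl⟩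
  -- Of `z` and its mirror image through `x`, one lies in `A`; either way `z` is in its span.
  set O := S ∩ (fun z => x - (z - x)) ⁻¹' S
  have hO : IsOpen O := hS.inter (hS.preimage (by fun_prop))
  have hOA : O ⊆ affineSpan ℝ A := by
    rintro z ⟨hz, hz'⟩
    have hmid := hf.mem_uIcc_sub_add hz' hx (by rwa [add_sub_cancel])
    rw [add_sub_cancel] at hmid
    rcases le_or_gt (f z) (f x) with hzx | hxz
    · exact subset_affineSpan ℝ A ⟨hz, hzx⟩
    · have hmirror : x - (z - x) ∈ affineSpan ℝ A :=
        subset_affineSpan ℝ A ⟨hz', (inf_le_iff.mp hmid.1).resolve_right hxz.not_ge⟩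
      have := AffineSubspace.vadd_mem_of_mem_direction
        (AffineSubspace.vsub_mem_direction hxA hmirror) hxA
      rwa [vsub_eq_sub, vadd_eq_add, sub_sub_cancel, sub_add_cancel] at this
  exact top_unique (hO.affineSpan_eq_top ⟨x, hx, by simpa⟩ ▸ affineSpan_le.mpr hOA)

theorem notMem_interior_sublevel [Nontrivial E] (hf : SegmentMonotoneOn f S) (hinj : InjOn f S)
    {x : E} (hx : x ∈ S) : x ∉ interior {z ∈ S | f z ≤ f x} := by
  intro hxi
  obtain ⟨v, hv⟩ := exists_ne (0 : E)
  obtain ⟨c, hc, hp, hm⟩ := isOpen_interior.exists_pos_add_smul_mem_and_sub_smul_mem hxi v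
  obtain ⟨hpS, hpx⟩ := interior_subset hp
  obtain ⟨hmS, hmx⟩ := interior_subset hm
  have hcv : c • v ≠ 0 := smul_ne_zero hc.ne' hv
  rcases le_sup_iff.mp (hf.mem_uIcc_sub_add hmS hx hpS).2 with h | h
  · exact hcv (sub_eq_self.mp (hinj hmS hx (hmx.antisymm h)))
  · exact hcv (add_eq_left.mp (hinj hpS hx (hpx.antisymm h)))

theorem exists_separatesAt [FiniteDimensional ℝ E] [Nontrivial E] (hf : SegmentMonotoneOn f S)
    (hinj : InjOn f S) (hSo : IsOpen S) (hSc : Convex ℝ S) {x : E} (hx : x ∈ S) :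
    ∃ ℓ : StrongDual ℝ E, ℓ ≠ 0 ∧ SeparatesAt f S ℓ x := by
  set A := {z ∈ S | f z ≤ f x}
  set B := {z ∈ S | f x ≤ f z}
  have hA : Convex ℝ A := (hf.quasilinearOn hSc).1 (f x)
  have hB : Convex ℝ B := (hf.quasilinearOn hSc).2 (f x)
  have hint : (interior A).Nonempty :=
    hA.interior_nonempty_iff_affineSpan_eq_top.mpr (hf.affineSpan_sublevel_eq_top hSo hx)
  have hdisj : Disjoint (interior A) B := disjoint_left.mpr fun z hzA hzB => by
    obtain ⟨hz, hzx⟩ := interior_subset hzA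
    rw [hinj hz hx (hzx.antisymm hzB.2)] at hzA
    exact hf.notMem_interior_sublevel hinj hx hzA
  obtain ⟨ℓ, u, hℓ0, hAu, huB⟩ :=
    geometric_hahn_banach_of_nonempty_interior hA hB hdisj hint ⟨x, hx, le_rfl⟩
  have hux : ℓ x = u := (hAu x ⟨hx, le_rfl⟩).antisymm (huB x ⟨hx, le_rfl⟩)
  refine ⟨ℓ, hℓ0, fun z hz => ⟨fun hlt => ?_, fun hlt => ?_⟩⟩
  · by_contra! h
    linarith [huB z ⟨hz, h⟩]
  · by_contra! h
    linarith [hAu z ⟨hz, h⟩]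

theorem exists_level_point_gt (hf : SegmentMonotoneOn f S) (hinj : InjOn f S) (hS : IsOpen S)
    {x v : E} (hx : x ∈ S) (hv : v ≠ 0) {ℓ : StrongDual ℝ E} (hℓv : ℓ v = 0) :
    ∃ b ∈ S, ℓ b = ℓ x ∧ f x < f b := by
  obtain ⟨c, hc, hp, hm⟩ := hS.exists_pos_add_smul_mem_and_sub_smul_mem hx v
  have hcv : c • v ≠ 0 := smul_ne_zero hc.ne' hv
  rcases le_sup_iff.mp (hf.mem_uIcc_sub_add hm hx hp).2 with h | h
  · refine ⟨_, hm, by simp [hℓv], h.lt_of_ne fun h' => hcv ?_⟩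
    exact (sub_eq_self.mp (hinj hm hx h'.symm))
  · refine ⟨_, hp, by simp [hℓv], h.lt_of_ne fun h' => hcv ?_⟩
    exact (add_eq_left.mp (hinj hp hx h'.symm))

end SegmentMonotoneOn

theorem SeparatesAt.lt_of_apply_eq {ℓ ℓ' : StrongDual ℝ E} {x b z : E}
    (hx : SeparatesAt f S ℓ x) (hb : SeparatesAt f S ℓ' b) (hℓ : ℓ ≠ 0) (hℓ' : ℓ' ≠ 0)
    (hS : IsOpen S) (hbS : b ∈ S) (hbx : ℓ b = ℓ x) (hz : z ∈ S) (hxz : ℓ x < ℓ z) :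
    f b < f z := by
  obtain ⟨t, ht, rfl⟩ := hx.exists_pos_smul_eq hb hℓ hℓ' hS hbS hbx rfl
  refine (hb z hz).2 ?_
  simpa only [smul_apply, smul_eq_mul, hbx] using mul_lt_mul_of_pos_left hxz ht

theorem SeparatesAt.apply_lt_apply_of_lt {ℓ₀ ℓ : StrongDual ℝ E} {p e : E} {s s' : ℝ}
    (hx : SeparatesAt f S ℓ (p + s • e)) (hp : SeparatesAt f S ℓ₀ p) (hℓ : ℓ ≠ 0)
    (hℓ₀ : ℓ₀ ≠ 0) (hS : IsOpen S) (hpS : p ∈ S) (he : ℓ₀ e ≠ 0) (hy : p + s' • e ∈ S)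
    (hlt : f (p + s • e) < f (p + s' • e)) : ℓ (p + s • e) < ℓ (p + s' • e) := by
  rcases lt_trichotomy (ℓ (p + s' • e)) (ℓ (p + s • e)) with h | h | h
  · exact absurd ((hx _ hy).1 h) hlt.not_gt
  · exfalso
    have hss' : s ≠ s' := by rintro rfl; exact lt_irrefl _ hlt
    have hℓe : ℓ e = 0 := by
      simp only [map_add, map_smul, smul_eq_mul] at h
      exact (mul_eq_zero.mp (by linarith : (s' - s) * ℓ e = 0)).resolve_left
        (sub_ne_zero.mpr hss'.symm)
    -- The level line of `p + s • e` then contains `p`, so it is the level line of `p`.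
    obtain ⟨t, ht, rfl⟩ := hp.exists_pos_smul_eq hx hℓ₀ hℓ hS hpS rfl (by simp [hℓe])
    simp [ht.ne', he] at hℓe
  · exact h

theorem SegmentMonotoneOn.not_injOn [FiniteDimensional ℝ E] (hE : 1 < finrank ℝ E)
    (hf : SegmentMonotoneOn f S) (hSo : IsOpen S) (hSc : Convex ℝ S) (hne : S.Nonempty) :
    ¬ InjOn f S := by
  intro hinj
  have : Nontrivial E := Module.nontrivial_of_finrank_pos (zero_lt_one.trans hE)
  choose! ℓ hℓ0 hℓ using fun x (hx : x ∈ S) => hf.exists_separatesAt hinj hSo hSc hx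
  have hlevel : ∀ x ∈ S, ∃ b ∈ S, ℓ x b = ℓ x x ∧ f x < f b := fun x hx => by
    obtain ⟨v, hv, hv0⟩ := Submodule.ne_bot_iff _ |>.mp
      (LinearMap.ker_ne_bot_of_finrank_lt (f := (ℓ x : E →ₗ[ℝ] ℝ)) (by rwa [finrank_self]))
    exact hf.exists_level_point_gt hinj hSo hx hv0 hv
  choose! b hbS hbℓ hfb using hlevel
  obtain ⟨p, hp⟩ := hne
  obtain ⟨e, he⟩ : ∃ e, ℓ p e ≠ 0 := by simpa [DFunLike.ne_iff] using hℓ0 p hp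
  have he0 : e ≠ 0 := by rintro rfl; simp at he
  set T := {s : ℝ | p + s • e ∈ S}
  have hgap : ∀ s ∈ T, ∀ s' ∈ T, f (p + s • e) < f (p + s' • e) →
      f (b (p + s • e)) < f (p + s' • e) := fun s hs s' hs' hlt =>
    (hℓ _ hs).lt_of_apply_eq (hℓ _ (hbS _ hs)) (hℓ0 _ hs) (hℓ0 _ (hbS _ hs)) hSo (hbS _ hs)
      (hbℓ _ hs) hs' ((hℓ _ hs).apply_lt_apply_of_lt (hℓ p hp) (hℓ0 _ hs) (hℓ0 p hp) hSo hp he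
        hs' hlt)
  have hdisj : T.PairwiseDisjoint fun s => Ioo (f (p + s • e)) (f (b (p + s • e))) := by
    intro s hs s' hs' hss'
    have hne : f (p + s • e) ≠ f (p + s' • e) := fun h =>
      hss' (smul_left_injective ℝ he0 (add_left_cancel (hinj hs hs' h)))
    rcases hne.lt_or_gt with h | h
    · exact disjoint_left.mpr fun z hz hz' => lt_asymm (hz.2.trans (hgap s hs s' hs' h)) hz'.1
    · exact disjoint_right.mpr fun z hz' hz => lt_asymm (hz'.2.trans (hgap s' hs' s hs h)) hz.1
  have hT : T.Countable := hdisj.countable_of_isOpen (fun _ _ => isOpen_Ioo)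
    (fun s hs => nonempty_Ioo.mpr (hfb _ hs))
  have hTo : IsOpen T := hSo.preimage (by fun_prop)
  have hTe := interior_eq_empty_iff_dense_compl.mpr (hT.dense_compl ℝ)
  rw [hTo.interior_eq, eq_empty_iff_forall_notMem] at hTe
  exact hTe 0 (by simpa [T] using hp)

/-- There is no injective monotone map from a nonempty open planar set
into the real line. -/
theorem stmt_14 (U : Set (ℝ × ℝ)) (hU : IsOpen U) (hne : U.Nonempty)
    (f : ℝ × ℝ → ℝ) (hinj : Set.InjOn f U) :
    ¬ (∀ a b x, a ∈ U → b ∈ U → x ∈ U → x ∈ segment ℝ a b →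
        f x ∈ Set.uIcc (f a) (f b)) := by
  intro hf
  obtain ⟨p, hp⟩ := hne
  obtain ⟨r, hr, hball⟩ := Metric.isOpen_iff.mp hU p hp
  exact SegmentMonotoneOn.not_injOn (by simp) (SegmentMonotoneOn.mono hf hball)
    Metric.isOpen_ball (convex_ball p r) ⟨p, Metric.mem_ball_self hr⟩ (hinj.mono hball)
end

section
/- Let S ⊆ ℝ² be the union of countably many pairwise parallel lines. Then there exists an injective monotone map f : S → ℝ. -/
namespace Stmt15Aux

noncomputable def g (t : ℝ) : ℝ := Real.arctan t / Real.pi + 1/2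

lemma g_pos (t : ℝ) : 0 < g t := by
  have h1 := Real.neg_pi_div_two_lt_arctan t
  have hπ := Real.pi_pos
  have h2 : -(1/2 : ℝ) < Real.arctan t / Real.pi := by
    rw [lt_div_iff₀ hπ]; nlinarith
  unfold g; linarith

lemma g_lt_one (t : ℝ) : g t < 1 := by
  have h1 := Real.arctan_lt_pi_div_two t
  have hπ := Real.pi_pos
  have h2 : Real.arctan t / Real.pi < 1/2 := by
    rw [div_lt_iff₀ hπ]; nlinarith
  unfold g; linarith

lemma g_mono : StrictMono g := by
  intro a b hab
  have hπ := Real.pi_pos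
  have h := Real.arctan_strictMono hab
  have h2 : Real.arctan a / Real.pi < Real.arctan b / Real.pi :=
    div_lt_div_of_pos_right h hπ
  unfold g; linarith

variable {I : Type} (w L : I → ℝ)

noncomputable def F (c : ℝ) : ℝ := ∑' i, if L i < c then w i else 0
noncomputable def mu (c : ℝ) : ℝ := ∑' i, if L i = c then w i else 0

variable (hw : ∀ i, 0 < w i) (hsw : Summable w)

section
include hw hsw

lemma summable_ite (P : I → Prop) [DecidablePred P] :
    Summable (fun i => if P i then w i else 0) := by
  apply Summable.of_nonneg_of_le (fun i => ?_) (fun i => ?_) hsw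
  · split_ifs; exacts [(hw i).le, le_refl _]
  · split_ifs; exacts [le_refl _, (hw i).le]

lemma F_mono {c c' : ℝ} (h : c ≤ c') : F w L c ≤ F w L c' := by
  apply Summable.tsum_le_tsum (fun i => ?_) (summable_ite w hw hsw _) (summable_ite w hw hsw _)
  split_ifs with h1 h2
  · exact le_refl _
  · exact absurd (lt_of_lt_of_le h1 h) h2
  · exact (hw i).le
  · exact le_refl _

lemma F_nonneg (c : ℝ) : 0 ≤ F w L c :=
  tsum_nonneg fun i => by split_ifs; exacts [(hw i).le, le_refl _]

lemma mu_nonneg (c : ℝ) : 0 ≤ mu w L c :=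
  tsum_nonneg fun i => by split_ifs; exacts [(hw i).le, le_refl _]

lemma mu_pos {c : ℝ} (i : I) (hi : L i = c) : 0 < mu w L c := by
  have h := Summable.le_tsum (summable_ite w hw hsw (fun j => L j = c)) i
    (fun j _ => by split_ifs; exacts [(hw j).le, le_refl _])
  rw [if_pos hi] at h
  exact lt_of_lt_of_le (hw i) h

lemma F_add_mu_le {c c' : ℝ} (h : c < c') : F w L c + mu w L c ≤ F w L c' := by
  rw [F, mu, ← Summable.tsum_add (summable_ite w hw hsw _) (summable_ite w hw hsw _)]
  refine Summable.tsum_le_tsum (fun i => ?_)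
    ((summable_ite w hw hsw _).add (summable_ite w hw hsw _)) (summable_ite w hw hsw _)
  rcases lt_trichotomy (L i) c with h1 | h1 | h1
  · rw [if_pos h1, if_neg (by linarith), if_pos (by linarith)]; linarith
  · rw [if_neg (by linarith), if_pos h1, if_pos (by linarith)]; linarith
  · rw [if_neg (by linarith), if_neg (by linarith)]
    have := (hw i).le
    split_ifs <;> linarith

end

end Stmt15Aux

open Stmt15Aux in
/-- A union of countably many pairwise parallel lines admits an injective
monotone map into ℝ. -/
theorem stmt_15 (I : Type) [Countable I] (v : ℝ × ℝ) (hv : v ≠ 0)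
    (p : I → ℝ × ℝ) (S : Set (ℝ × ℝ)) (hS : S = ⋃ i, lineThrough (p i) v) :
    ∃ f : ℝ × ℝ → ℝ, Set.InjOn f S ∧
      ∀ a b x, a ∈ S → b ∈ S → x ∈ S → x ∈ segment ℝ a b →
        f x ∈ Set.uIcc (f a) (f b) := by
  classical
  obtain ⟨e, he⟩ := exists_injective_nat I
  set w : I → ℝ := fun i => (1/2 : ℝ) ^ (e i) with hw_def
  have hw : ∀ i, 0 < w i := fun i => by positivity
  have hsw : Summable w := summable_geometric_two.comp_injective he
  -- linear functionals
  set ℓ : ℝ × ℝ → ℝ := fun x => x.1 * v.2 - x.2 * v.1 with hℓ_def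
  set m : ℝ × ℝ → ℝ := fun x => x.1 * v.1 + x.2 * v.2 with hm_def
  set L : I → ℝ := fun i => ℓ (p i) with hL_def
  -- joint injectivity of (ℓ, m)
  have hvsq : 0 < v.1 ^ 2 + v.2 ^ 2 := by
    rcases eq_or_ne v.1 0 with h1 | h1
    · have h2 : v.2 ≠ 0 := fun h2 => hv (Prod.ext h1 h2)
      positivity
    · positivity
  have hinj : ∀ x y : ℝ × ℝ, ℓ x = ℓ y → m x = m y → x = y := by
    intro x y h1 h2
    simp only [hℓ_def, hm_def] at h1 h2
    have d1 : (x.1 - y.1) * (v.1 ^ 2 + v.2 ^ 2) = 0 := by linear_combination v.1 * h2 + v.2 * h1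
    have d2 : (x.2 - y.2) * (v.1 ^ 2 + v.2 ^ 2) = 0 := by linear_combination v.2 * h2 - v.1 * h1
    have e1 : x.1 = y.1 := by
      have := mul_eq_zero.mp d1
      rcases this with h | h
      · linarith
      · exact absurd h hvsq.ne'
    have e2 : x.2 = y.2 := by
      have := mul_eq_zero.mp d2
      rcases this with h | h
      · linarith
      · exact absurd h hvsq.ne'
    exact Prod.ext e1 e2
  -- membership
  have hmem : ∀ x ∈ S, ∃ i, ℓ x = L i := by
    intro x hx
    rw [hS, Set.mem_iUnion] at hx
    obtain ⟨i, t, rfl⟩ := hx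
    refine ⟨i, ?_⟩
    simp only [hℓ_def, hL_def, Prod.fst_add, Prod.snd_add, Prod.smul_fst, Prod.smul_snd,
      smul_eq_mul]
    ring
  -- the function
  set f : ℝ × ℝ → ℝ := fun x => F w L (ℓ x) + g (m x) * mu w L (ℓ x) with hf_def
  have hfeq : ∀ z, f z = F w L (ℓ z) + g (m z) * mu w L (ℓ z) := fun z => rfl
  refine ⟨f, ?_, ?_⟩
  · -- injectivity
    intro x hx y hy hfxy
    obtain ⟨ix, hix⟩ := hmem x hx
    obtain ⟨iy, hiy⟩ := hmem y hy
    have hμx : 0 < mu w L (ℓ x) := mu_pos w L hw hsw ix hix.symm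
    have hμy : 0 < mu w L (ℓ y) := mu_pos w L hw hsw iy hiy.symm
    rw [hfeq, hfeq] at hfxy
    rcases lt_trichotomy (ℓ x) (ℓ y) with hc | hc | hc
    · exfalso
      have h1 := g_lt_one (m x)
      have h2 : F w L (ℓ x) + mu w L (ℓ x) ≤ F w L (ℓ y) := F_add_mu_le w L hw hsw hc
      have h3 := g_pos (m y)
      nlinarith [mul_lt_mul_of_pos_right h1 hμx, mul_pos h3 hμy]
    · rw [hc] at hfxy hμx
      have hgg : g (m x) * mu w L (ℓ y) = g (m y) * mu w L (ℓ y) := by linarith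
      have hg : g (m x) = g (m y) := mul_right_cancel₀ hμx.ne' hgg
      exact hinj x y hc (g_mono.injective hg)
    · exfalso
      have h1 := g_lt_one (m y)
      have h2 : F w L (ℓ y) + mu w L (ℓ y) ≤ F w L (ℓ x) := F_add_mu_le w L hw hsw hc
      have h3 := g_pos (m x)
      nlinarith [mul_lt_mul_of_pos_right h1 hμy, mul_pos h3 hμx]
  · -- monotonicity
    have key : ∀ a b x, a ∈ S → b ∈ S → x ∈ S → x ∈ segment ℝ a b → ℓ a ≤ ℓ b →
        f x ∈ Set.uIcc (f a) (f b) := by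
      intro a b x ha hb hx hseg hab
      obtain ⟨u, t, hu, ht, hut, hcomb⟩ := hseg
      have hu1 : u = 1 - t := by linarith
      subst hu1
      have hℓx : ℓ x = (1 - t) * ℓ a + t * ℓ b := by
        subst hcomb
        simp only [hℓ_def, Prod.fst_add, Prod.snd_add, Prod.smul_fst, Prod.smul_snd,
          smul_eq_mul]
        ring
      have hmx : m x = (1 - t) * m a + t * m b := by
        subst hcomb
        simp only [hm_def, Prod.fst_add, Prod.snd_add, Prod.smul_fst, Prod.smul_snd,
          smul_eq_mul]
        ring
      rcases eq_or_lt_of_le hab with heq | hlt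
      · -- same line
        have hℓxa : ℓ x = ℓ a := by rw [hℓx, ← heq]; ring
        have hμ := mu_nonneg w L hw hsw (ℓ a)
        rw [Set.mem_uIcc, hfeq, hfeq, hfeq, hℓxa, ← heq]
        rcases le_total (m a) (m b) with hm' | hm'
        · left
          have h1 : m a ≤ m x := by
            rw [hmx]; nlinarith [mul_nonneg ht (sub_nonneg.mpr hm')]
          have h2 : m x ≤ m b := by
            rw [hmx]; nlinarith [mul_nonneg hu (sub_nonneg.mpr hm')]
          have g1 := mul_le_mul_of_nonneg_right (g_mono.monotone h1) hμ
          have g2 := mul_le_mul_of_nonneg_right (g_mono.monotone h2) hμ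
          exact ⟨by linarith, by linarith⟩
        · right
          have h1 : m b ≤ m x := by
            rw [hmx]; nlinarith [mul_nonneg hu (sub_nonneg.mpr hm')]
          have h2 : m x ≤ m a := by
            rw [hmx]; nlinarith [mul_nonneg ht (sub_nonneg.mpr hm')]
          have g1 := mul_le_mul_of_nonneg_right (g_mono.monotone h1) hμ
          have g2 := mul_le_mul_of_nonneg_right (g_mono.monotone h2) hμ
          exact ⟨by linarith, by linarith⟩
      · -- different lines, ℓ a < ℓ b
        have hax : ℓ a ≤ ℓ x := by
          rw [hℓx]; nlinarith [mul_nonneg ht (sub_nonneg.mpr hab)]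
        have hxb : ℓ x ≤ ℓ b := by
          rw [hℓx]; nlinarith [mul_nonneg hu (sub_nonneg.mpr hab)]
        rcases eq_or_lt_of_le hax with heqa | hlta
        · have ht0 : t * (ℓ b - ℓ a) = 0 := by linear_combination - hℓx - heqa
          rcases mul_eq_zero.mp ht0 with ht0 | ht0
          · have hxa : x = a := by rw [← hcomb, ht0]; norm_num
            rw [hxa]; exact Set.left_mem_uIcc
          · exfalso; linarith
        rcases eq_or_lt_of_le hxb with heqb | hltb
        · have ht1 : (1 - t) * (ℓ b - ℓ a) = 0 := by linear_combination hℓx - heqb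
          rcases mul_eq_zero.mp ht1 with ht1 | ht1
          · have hxb' : x = b := by
              rw [← hcomb, show t = 1 by linarith]; norm_num
            rw [hxb']; exact Set.right_mem_uIcc
          · exfalso; linarith
        · have hμa := mu_nonneg w L hw hsw (ℓ a)
          have hμx := mu_nonneg w L hw hsw (ℓ x)
          have hμb := mu_nonneg w L hw hsw (ℓ b)
          have ga1 := (g_lt_one (m a)).le
          have gx0 := (g_pos (m x)).le
          have gx1 := (g_lt_one (m x)).le
          have gb0 := (g_pos (m b)).le
          have h2 : F w L (ℓ a) + mu w L (ℓ a) ≤ F w L (ℓ x) := F_add_mu_le w L hw hsw hlta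
          have h5 : F w L (ℓ x) + mu w L (ℓ x) ≤ F w L (ℓ b) := F_add_mu_le w L hw hsw hltb
          rw [Set.mem_uIcc, hfeq, hfeq, hfeq]
          left
          constructor
          · nlinarith [mul_le_mul_of_nonneg_right ga1 hμa, mul_nonneg gx0 hμx]
          · nlinarith [mul_le_mul_of_nonneg_right gx1 hμx, mul_nonneg gb0 hμb]
    intro a b x ha hb hx hseg
    rcases le_total (ℓ a) (ℓ b) with h | h
    · exact key a b x ha hb hx hseg h
    · rw [Set.uIcc_comm]
      exact key b a x hb ha hx (by rwa [segment_symm]) h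
end
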